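/- arXiv:2002.01597 — 12 statements merged into one kernel-verified Lean document; each statement's English description precedes it below -/
import Mathlib

section
/- If G is an n-vertex graph (n ≥ 3) with minimum degree δ(G) ≥ n/2, then G contains a Hamiltonian cycle. -/
/-!
The argument needs only Ore's condition `n ≤ deg u + deg v` for non-adjacent `u ≠ v`.
Take a longest path `p` from `u` to `v`; by maximality every neighbour of `u` or `v` lies on `p`.
If `u ~ v`, closing `p` gives a cycle. Otherwise `deg u + deg v ≥ n > |p|`, so by pigeonhole some
edge `x y` of `p` has `u ~ y` and `v ~ x`, and `u → y ⋯ v → x ⋯ u` is a cycle on the vertices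
of `p`. Either way there is a cycle of length `|p| + 1`, longer than every path. Ore's condition
gives non-adjacent vertices a common neighbour, so `G` is connected, and in a connected graph a
cycle missing a vertex extends to a path as long as the cycle. Hence the cycle is Hamiltonian.
-/

open Finset

namespace SimpleGraph

variable {V : Type*} {G : SimpleGraph V}

lemma exists_adj_adj_of_card_le_degree_add_degree [Fintype V] [DecidableRel G.Adj] {a b : V}
    (hab : a ≠ b) (hadj : ¬G.Adj a b) (h : Fintype.card V ≤ G.degree a + G.degree b) :
    ∃ c, G.Adj a c ∧ G.Adj b c := by
  classical
  have ha : G.neighborFinset a ⊆ {a, b}ᶜ := fun c hc => by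
    simp only [mem_neighborFinset] at hc
    simpa using ⟨hc.ne', fun hcb => hadj (hcb ▸ hc)⟩
  have hb : G.neighborFinset b ⊆ {a, b}ᶜ := fun c hc => by
    simp only [mem_neighborFinset] at hc
    simpa using ⟨fun hca => hadj (hca ▸ hc).symm, hc.ne'⟩
  have hcard : #({a, b}ᶜ : Finset V) < #(G.neighborFinset a) + #(G.neighborFinset b) := by
    have : 0 < Fintype.card V := Fintype.card_pos_iff.2 ⟨a⟩
    rw [card_compl, card_pair hab, card_neighborFinset_eq_degree, card_neighborFinset_eq_degree]
    omega
  obtain ⟨c, hc⟩ := inter_nonempty_of_card_lt_card_add_card ha hb hcard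
  rw [mem_inter, mem_neighborFinset, mem_neighborFinset] at hc
  exact ⟨c, hc⟩

lemma connected_of_card_le_degree_add_degree [Fintype V] [DecidableRel G.Adj] [Nonempty V]
    (h : ∀ a b, a ≠ b → ¬G.Adj a b → Fintype.card V ≤ G.degree a + G.degree b) :
    G.Connected := by
  refine (connected_iff G).2 ⟨fun a b => ?_, ‹_›⟩
  by_cases hab : a = b
  · exact hab ▸ Reachable.refl a
  by_cases hadj : G.Adj a b
  · exact hadj.reachable
  obtain ⟨c, hac, hbc⟩ := exists_adj_adj_of_card_le_degree_add_degree hab hadj (h a b hab hadj)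
  exact hac.reachable.trans hbc.reachable.symm

namespace Walk

lemma eq_or_eq_of_mem_support_of_length_le_one {u v w : V} {p : G.Walk u v} (hp : p.length ≤ 1)
    (hw : w ∈ p.support) : w = u ∨ w = v := by
  cases p with
  | nil => simp_all
  | cons _ q => cases q with
    | nil => simp_all
    | cons _ _ => simp at hp

lemma exists_eq_append_cons_of_mem_darts {u v : V} {p : G.Walk u v} {d : G.Dart}
    (hd : d ∈ p.darts) :
    ∃ (q : G.Walk u d.fst) (r : G.Walk d.snd v), p = q.append (cons d.adj r) := by
  induction p with
  | nil => simp at hd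
  | cons h p ih =>
    rcases List.mem_cons.1 hd with rfl | hd
    · exact ⟨nil, p, rfl⟩
    · obtain ⟨q, r, rfl⟩ := ih hd
      exact ⟨cons h q, r, rfl⟩

lemma exists_mem_darts_adj_adj [Fintype V] [DecidableRel G.Adj] {u v : V} (p : G.Walk u v)
    (hu : ∀ w, G.Adj u w → w ∈ p.support) (hv : ∀ w, G.Adj v w → w ∈ p.support)
    (hlen : p.length < G.degree u + G.degree v) :
    ∃ d ∈ p.darts, G.Adj u d.snd ∧ G.Adj v d.fst := by
  classical
  set S := p.darts.toFinset
  have hA : G.degree u ≤ #(S.filter (G.Adj u ·.snd)) := by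
    rw [← card_neighborFinset_eq_degree]
    refine (card_le_card fun w hw => ?_).trans (card_image_le (f := fun d : G.Dart => d.snd))
    rw [mem_neighborFinset] at hw
    have hw' := hu w hw
    rw [← cons_map_snd_darts, List.mem_cons, or_iff_right hw.ne', List.mem_map] at hw'
    obtain ⟨d, hd, rfl⟩ := hw'
    exact mem_image_of_mem _ (mem_filter.2 ⟨List.mem_toFinset.2 hd, hw⟩)
  have hB : G.degree v ≤ #(S.filter (G.Adj v ·.fst)) := by
    rw [← card_neighborFinset_eq_degree]
    refine (card_le_card fun w hw => ?_).trans (card_image_le (f := fun d : G.Dart => d.fst))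
    rw [mem_neighborFinset] at hw
    have hw' := hv w hw
    rw [← map_fst_darts_append, List.mem_append, List.mem_singleton, or_iff_left hw.ne',
      List.mem_map] at hw'
    obtain ⟨d, hd, rfl⟩ := hw'
    exact mem_image_of_mem _ (mem_filter.2 ⟨List.mem_toFinset.2 hd, hw⟩)
  have hS : #S ≤ p.length := (List.toFinset_card_le _).trans_eq p.length_darts
  obtain ⟨d, hd⟩ := inter_nonempty_of_card_lt_card_add_card (filter_subset (G.Adj u ·.snd) S)
    (filter_subset (G.Adj v ·.fst) S) (by omega)
  simp only [mem_inter, mem_filter, S, List.mem_toFinset] at hd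
  exact ⟨d, hd.1.1, hd.1.2, hd.2.2⟩

lemma IsPath.isCycle_cons {u v : V} {p : G.Walk v u} (hp : p.IsPath) (h : G.Adj u v)
    (hlen : 2 ≤ p.length) : (cons h p).IsCycle := by
  refine isCycle_iff_isPath_tail_and_le_length.2 ⟨?_, by rw [length_cons]; omega⟩
  simpa using hp

lemma IsPath.append_cons_reverse {u v x y : V} {q : G.Walk u x} {r : G.Walk y v}
    {hxy : G.Adj x y} (hp : (q.append (cons hxy r)).IsPath) (hvx : G.Adj v x) :
    (r.append (cons hvx q.reverse)).IsPath := by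
  rw [isPath_def] at hp ⊢
  simp only [support_append, support_cons, support_reverse, List.tail_cons] at hp ⊢
  exact List.nodup_append_comm.1 ((List.reverse_perm _).append_right _ |>.nodup_iff.2 hp)

def IsLongestPath {u v : V} (p : G.Walk u v) : Prop :=
  p.IsPath ∧ ∀ ⦃a b : V⦄ (q : G.Walk a b), q.IsPath → q.length ≤ p.length

variable (G) in
lemma exists_isLongestPath [Fintype V] [DecidableRel G.Adj] [Nonempty V] :
    ∃ (u v : V) (p : G.Walk u v), p.IsLongestPath := by
  classical
  obtain ⟨x⟩ := ‹Nonempty V›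
  obtain ⟨⟨u, v, p⟩, -, hmax⟩ := exists_max_image univ
    (fun t : (u : V) × (v : V) × G.Path u v => (t.2.2 : G.Walk t.1 t.2.1).length)
    ⟨⟨x, x, Path.nil⟩, mem_univ _⟩
  exact ⟨u, v, p, p.2, fun a b q hq => hmax ⟨a, b, q, hq⟩ (mem_univ _)⟩

namespace IsLongestPath

variable {u v : V} {p : G.Walk u v}

lemma reverse (hp : p.IsLongestPath) : p.reverse.IsLongestPath :=
  ⟨hp.1.reverse, by simpa using hp.2⟩

lemma mem_support_of_adj_start (hp : p.IsLongestPath) {w : V} (h : G.Adj u w) :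
    w ∈ p.support := by
  by_contra hw
  simpa using hp.2 (cons h.symm p) (hp.1.cons hw)

lemma mem_support_of_adj_end (hp : p.IsLongestPath) {w : V} (h : G.Adj v w) :
    w ∈ p.support := by
  simpa using hp.reverse.mem_support_of_adj_start h

lemma two_le_length [Fintype V] (hp : p.IsLongestPath) (hG : G.Connected)
    (hn : 3 ≤ Fintype.card V) : 2 ≤ p.length := by
  classical
  by_contra! hlen
  have hends := fun w => eq_or_eq_of_mem_support_of_length_le_one (p := p) (w := w) (by omega)
  obtain ⟨z, -, hz⟩ := exists_mem_notMem_of_card_lt_card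
    (s := {u, v}) (t := univ) (card_le_two.trans_lt (by rw [card_univ]; omega))
  have hzp : z ∉ p.support := fun h => hz (by simpa using hends z h)
  obtain ⟨d, -, hd, hd'⟩ := (hG.preconnected u z).some.exists_boundary_dart
    {w | w ∈ p.support} p.start_mem_support hzp
  rcases hends _ hd with hdu | hdv
  · exact hd' (hp.mem_support_of_adj_start (hdu ▸ d.adj))
  · exact hd' (hp.mem_support_of_adj_end (hdv ▸ d.adj))

lemma exists_isCycle [Fintype V] [DecidableRel G.Adj] (hp : p.IsLongestPath)
    (hlen : 2 ≤ p.length) (hdeg : G.Adj u v ∨ p.length < G.degree u + G.degree v) :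
    ∃ c : G.Walk u u, c.IsCycle ∧ c.length = p.length + 1 := by
  rcases hdeg with huv | hlt
  · exact ⟨cons huv p.reverse, hp.1.reverse.isCycle_cons huv (by simpa using hlen), by simp⟩
  obtain ⟨d, hd, hud, hvd⟩ :=
    exists_mem_darts_adj_adj p (fun _ => hp.mem_support_of_adj_start)
      (fun _ => hp.mem_support_of_adj_end) hlt
  obtain ⟨q, r, rfl⟩ := exists_eq_append_cons_of_mem_darts hd
  refine ⟨_, (hp.1.append_cons_reverse hvd).isCycle_cons hud ?_, ?_⟩ <;>
    simp only [length_append, length_cons, length_reverse] at hlen ⊢ <;> omega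

end IsLongestPath

lemma IsCycle.exists_isPath_length_eq [DecidableEq V] {w : V} {c : G.Walk w w}
    (hc : c.IsCycle) {x y : V} (hy : y ∈ c.support) (hx : x ∉ c.support) (hxy : G.Adj x y) :
    ∃ (a b : V) (q : G.Walk a b), q.IsPath ∧ q.length = c.length := by
  have hc' := hc.rotate hy
  refine ⟨x, _, cons hxy (c.rotate y hy).tail.reverse, hc'.isPath_tail.reverse.cons ?_, ?_⟩
  · rw [support_reverse, List.mem_reverse]
    exact fun h => hx ((mem_support_rotate_iff c y hy).1
      (List.mem_of_mem_tail (support_tail_of_not_nil _ hc'.not_nil ▸ h)))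
  · rw [length_cons, length_reverse, length_tail_add_one hc'.not_nil, length_rotate]

lemma IsCycle.isHamiltonianCycle_of_forall_length_lt [DecidableEq V] (hG : G.Connected)
    {w : V} {c : G.Walk w w} (hc : c.IsCycle)
    (hlong : ∀ ⦃a b : V⦄ (q : G.Walk a b), q.IsPath → q.length < c.length) :
    c.IsHamiltonianCycle := by
  have hall : ∀ z, z ∈ c.support := by
    by_contra! ⟨z, hz⟩
    obtain ⟨d, -, hd, hd'⟩ := (hG.preconnected w z).some.exists_boundary_dart
      {v | v ∈ c.support} c.start_mem_support hz
    obtain ⟨a, b, q, hq, hlen⟩ := hc.exists_isPath_length_eq hd hd' d.adj.symm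
    exact (hlong q hq).ne hlen
  refine ⟨hc, hc.isPath_tail.isHamiltonian_of_mem fun z => ?_⟩
  rw [support_tail_of_not_nil _ hc.not_nil]
  rcases (mem_support_iff c).1 (hall z) with rfl | h
  · exact end_mem_tail_support hc.not_nil
  · exact h

end Walk

theorem isHamiltonian_of_card_le_degree_add_degree [Fintype V] [DecidableEq V]
    [DecidableRel G.Adj] (hn : 3 ≤ Fintype.card V)
    (h : ∀ a b, a ≠ b → ¬G.Adj a b → Fintype.card V ≤ G.degree a + G.degree b) :
    G.IsHamiltonian := by
  intro _
  have : Nonempty V := Fintype.card_pos_iff.1 (by omega)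
  have hG := connected_of_card_le_degree_add_degree h
  obtain ⟨u, v, p, hp⟩ := Walk.exists_isLongestPath G
  have hlen := hp.two_le_length hG hn
  have hdeg : G.Adj u v ∨ p.length < G.degree u + G.degree v := by
    refine or_iff_not_imp_left.2 fun huv => hp.1.length_lt.trans_le (h u v ?_ huv)
    rintro rfl
    have := Walk.length_eq_zero_iff.2 (Walk.isPath_iff_nil.1 hp.1)
    omega
  obtain ⟨c, hc, hclen⟩ := hp.exists_isCycle hlen hdeg
  exact ⟨u, c, hc.isHamiltonianCycle_of_forall_length_lt hG fun a b q hq =>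
    hclen ▸ Nat.lt_succ_of_le (hp.2 q hq)⟩

end SimpleGraph

/-- Dirac's theorem: if `G` is a graph on `n ≥ 3` vertices with minimum degree at least
`n / 2` (i.e. `n ≤ 2 · deg v` for every vertex `v`), then `G` is Hamiltonian. -/
theorem stmt_0 {V : Type*} [Fintype V] [DecidableEq V] (G : SimpleGraph V)
    [DecidableRel G.Adj] (hn : 3 ≤ Fintype.card V)
    (hδ : ∀ v : V, Fintype.card V ≤ 2 * G.degree v) :
    G.IsHamiltonian :=
  G.isHamiltonian_of_card_le_degree_add_degree hn fun a b _ _ => by linarith [hδ a, hδ b]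
end

section
/- If every pair of nonadjacent vertices x, y in a graph G on n ≥ 3 vertices satisfies deg(x) + deg(y) ≥ n + 1, then G is Hamiltonian-connected, i.e., between any two vertices there is a Hamiltonian path. -/
/-!
Adding an edge `uv` between non-adjacent vertices preserves the degree condition, so by downward
induction on `G`, starting from the complete graph, it suffices to turn a Hamiltonian `x`–`y`
path `w₀ … wₙ₋₁` of `G + uv` whose edge `wᵢwᵢ₊₁` is `uv` into one of `G`. Since
`deg wᵢ + deg wᵢ₊₁ ≥ n + 1`, the indices `j < n - 1` with `wᵢ ~ wⱼ` and those with
`wᵢ₊₁ ~ wⱼ₊₁`, all lying among the `n - 2` indices other than `i`, must overlap. Reversing the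
stretch of the path between positions `i` and `j` then trades the edges `wᵢwᵢ₊₁`, `wⱼwⱼ₊₁` for
`wᵢwⱼ`, `wᵢ₊₁wⱼ₊₁` and keeps the endpoints. Paths are encoded as index maps `ℕ → V`, so that
this reversal is precomposition with `Nat.reflectIcc`.
-/

open Finset

def Nat.reflectIcc (a b k : ℕ) : ℕ := if a ≤ k ∧ k ≤ b then a + b - k else k

theorem Nat.reflectIcc_involutive (a b : ℕ) : Function.Involutive (Nat.reflectIcc a b) := by
  intro k
  unfold Nat.reflectIcc
  split_ifs <;> omega

theorem Nat.bijOn_reflectIcc {a b n : ℕ} (hb : b < n) :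
    Set.BijOn (Nat.reflectIcc a b) (Set.Iio n) (Set.Iio n) :=
  have hmaps : Set.MapsTo (Nat.reflectIcc a b) (Set.Iio n) (Set.Iio n) := fun k hk => by
    simp only [Set.mem_Iio, Nat.reflectIcc] at hk ⊢
    split_ifs <;> omega
  have hinv := (Nat.reflectIcc_involutive a b).leftInverse
  Set.InvOn.bijOn ⟨hinv.leftInvOn _, hinv.leftInvOn _⟩ hmaps hmaps

theorem Equiv.Perm.exists_apply_eq_and_apply_eq {α : Type*} [DecidableEq α] {a b c d : α}
    (hab : a ≠ b) (hcd : c ≠ d) : ∃ σ : Equiv.Perm α, σ a = c ∧ σ b = d := by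
  refine ⟨Equiv.swap a c * Equiv.swap b (Equiv.swap a c d), ?_, by simp⟩
  have had : a ≠ Equiv.swap a c d := by
    rw [Ne, eq_comm, Equiv.swap_apply_eq_iff, Equiv.swap_apply_left]; exact hcd.symm
  simp [Equiv.swap_apply_of_ne_of_ne hab had]

theorem Fintype.exists_bijOn_Iio_card (α : Type*) [Fintype α] [Nonempty α] :
    ∃ f : ℕ → α, Set.BijOn f (Set.Iio (Fintype.card α)) Set.univ := by
  let e := (Fintype.equivFin α).symm
  refine ⟨fun k => if hk : k < Fintype.card α then e ⟨k, hk⟩ else Classical.arbitrary α,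
    fun _ _ => trivial, fun k hk l hl hkl => ?_,
    fun v _ => ⟨(e.symm v : ℕ), (e.symm v).isLt, by simp⟩⟩
  simp only [Set.mem_Iio] at hk hl
  simpa [hk, hl, Fin.ext_iff] using hkl

namespace SimpleGraph

variable {V : Type*}

theorem sup_edge_adj_of_not_adj {G : SimpleGraph V} {u v a b : V}
    (h : (G ⊔ edge u v).Adj a b) (hG : ¬G.Adj a b) : s(a, b) = s(u, v) := by
  rcases (sup_adj _ _ _ _).1 h with h | h
  · exact absurd h hG
  · exact Sym2.eq_iff.2 ((edge_adj _ _ _ _).1 h).1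

variable [Fintype V]

structure IsHamiltonianSeq (G : SimpleGraph V) (f : ℕ → V) (x y : V) : Prop where
  bijOn : Set.BijOn f (Set.Iio (Fintype.card V)) Set.univ
  map_zero : f 0 = x
  map_pred_card : f (Fintype.card V - 1) = y
  adj : ∀ k, k + 1 < Fintype.card V → G.Adj (f k) (f (k + 1))

theorem IsHamiltonianSeq.exists_isHamiltonian_walk [DecidableEq V] {G : SimpleGraph V}
    {f : ℕ → V} {x y : V} (h : G.IsHamiltonianSeq f x y) : ∃ p : G.Walk x y, p.IsHamiltonian := by
  have hn : Fintype.card V ≠ 0 := have : Nonempty V := ⟨x⟩; Fintype.card_ne_zero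
  set l := (List.range (Fintype.card V)).map f
  have hne : l ≠ [] := by simp [l, hn]
  have hchain : l.IsChain G.Adj :=
    List.isChain_map f |>.2 <| (List.isChain_range _ _).2 fun k hk => h.adj k (by omega)
  have hhead : l.head hne = x := by simp [l, List.head_range, h.map_zero]
  have hlast : l.getLast hne = y := by simp [l, List.getLast_range, h.map_pred_card]
  have hnodup : l.Nodup := List.nodup_range.map_on fun a ha b hb hab =>
    h.bijOn.injOn (by simpa using ha) (by simpa using hb) hab
  have hmem : ∀ v, v ∈ l := fun v => by
    obtain ⟨k, hk, rfl⟩ := h.bijOn.surjOn (Set.mem_univ v)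
    exact List.mem_map_of_mem (List.mem_range.2 hk)
  refine ⟨(Walk.ofSupport l hne hchain).copy hhead hlast, fun v => ?_⟩
  rw [Walk.support_copy, Walk.support_ofSupport]
  exact List.count_eq_one_of_mem hnodup (hmem v)

theorem degree_eq_card_filter_adj (G : SimpleGraph V) [DecidableRel G.Adj] {f : ℕ → V} {n : ℕ}
    (hf : Set.BijOn f (Set.Iio n) Set.univ) (v : V) :
    G.degree v = #{k ∈ range n | G.Adj v (f k)} := by
  rw [← card_neighborFinset_eq_degree]
  refine (card_nbij f (fun k hk => ?_) (hf.injOn.mono fun k hk => ?_) fun w hw => ?_).symm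
  · simpa using (mem_filter.1 hk).2
  · simpa using (mem_filter.1 hk).1
  · obtain ⟨k, hk, rfl⟩ := hf.surjOn (Set.mem_univ w)
    exact ⟨k, by simpa [mem_filter] using ⟨hk, (mem_neighborFinset _ _ _).1 hw⟩, rfl⟩

theorem exists_adj_adj_succ (G : SimpleGraph V) [DecidableRel G.Adj] {f : ℕ → V}
    (hf : Set.BijOn f (Set.Iio (Fintype.card V)) Set.univ) {i : ℕ} (hi : i + 1 < Fintype.card V)
    (hdeg : Fintype.card V + 1 ≤ G.degree (f i) + G.degree (f (i + 1))) :
    ∃ j, j + 1 < Fintype.card V ∧ G.Adj (f i) (f j) ∧ G.Adj (f (i + 1)) (f (j + 1)) := by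
  obtain ⟨m, hm⟩ : ∃ m, Fintype.card V = m + 1 := ⟨Fintype.card V - 1, by omega⟩
  set S := {j ∈ range m | G.Adj (f i) (f j)}
  set T := {j ∈ range m | G.Adj (f (i + 1)) (f (j + 1))}
  have hS : G.degree (f i) ≤ #S + 1 := by
    rw [degree_eq_card_filter_adj G hf, hm, range_add_one, filter_insert]
    split_ifs
    exacts [card_insert_le _ _, Nat.le_succ _]
  have hT : G.degree (f (i + 1)) ≤ #T + 1 := by
    rw [degree_eq_card_filter_adj G hf, hm, range_add_one', filter_insert, filter_map]
    split_ifs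
    exacts [(card_insert_le _ _).trans (by rw [card_map]; rfl),
      (card_map _).le.trans (Nat.le_succ _)]
  have hS_sub : S ⊆ (range m).erase i := fun j hj => by
    simp only [S, mem_filter, mem_range] at hj
    exact mem_erase.2 ⟨by rintro rfl; exact G.loopless.irrefl _ hj.2, mem_range.2 hj.1⟩
  have hT_sub : T ⊆ (range m).erase i := fun j hj => by
    simp only [T, mem_filter, mem_range] at hj
    exact mem_erase.2 ⟨by rintro rfl; exact G.loopless.irrefl _ hj.2, mem_range.2 hj.1⟩
  obtain ⟨j, hj⟩ := inter_nonempty_of_card_lt_card_add_card hS_sub hT_sub <| by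
    rw [card_erase_of_mem (mem_range.2 (by omega)), card_range]; omega
  simp only [S, T, mem_inter, mem_filter, mem_range] at hj
  exact ⟨j, by omega, hj.1.2, hj.2.2⟩

theorem isHamiltonianSeq_comp_reflectIcc {G : SimpleGraph V} {f : ℕ → V} {x y : V} {a b : ℕ}
    (hf : Set.BijOn f (Set.Iio (Fintype.card V)) Set.univ) (h0 : f 0 = x)
    (hlast : f (Fintype.card V - 1) = y)
    (hadj : ∀ k, k + 1 < Fintype.card V → k + 1 ≠ a → k ≠ b → G.Adj (f k) (f (k + 1)))
    (ha : 0 < a) (hab : a ≤ b) (hb : b + 1 < Fintype.card V)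
    (hleft : G.Adj (f (a - 1)) (f b)) (hright : G.Adj (f a) (f (b + 1))) :
    G.IsHamiltonianSeq (f ∘ Nat.reflectIcc a b) x y where
  bijOn := hf.comp (Nat.bijOn_reflectIcc (by omega))
  map_zero := by simp [Nat.reflectIcc, h0, ha.ne']
  map_pred_card := by
    rw [Function.comp_apply, Nat.reflectIcc, if_neg (by omega), hlast]
  adj k hk := by
    simp only [Function.comp_apply, Nat.reflectIcc]
    split_ifs with hk₀ hk₁ hk₁
    · rw [show a + b - k = a + b - (k + 1) + 1 by omega]
      exact (hadj _ (by omega) (by omega) (by omega)).symm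
    · obtain rfl : k = b := by omega
      rwa [Nat.add_sub_cancel]
    · obtain rfl : a = k + 1 := by omega
      rwa [Nat.add_sub_cancel_left]
    · exact hadj k hk (by omega) (by omega)

theorem IsHamiltonianSeq.exists_of_sup_edge {G : SimpleGraph V} [DecidableRel G.Adj]
    {f : ℕ → V} {x y u v : V} (hdeg : Fintype.card V + 1 ≤ G.degree u + G.degree v)
    (h : (G ⊔ edge u v).IsHamiltonianSeq f x y) : ∃ g, G.IsHamiltonianSeq g x y := by
  by_cases hG : ∀ k, k + 1 < Fintype.card V → G.Adj (f k) (f (k + 1))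
  · exact ⟨f, { h with adj := hG }⟩
  push Not at hG
  obtain ⟨i, hi, hi_not⟩ := hG
  have hi_edge := sup_edge_adj_of_not_adj (h.adj i hi) hi_not
  have hadj : ∀ k, k + 1 < Fintype.card V → k ≠ i → G.Adj (f k) (f (k + 1)) := by
    intro k hk hki
    by_contra hk_not
    have hinj := h.bijOn.injOn
    rcases Sym2.eq_iff.1 ((sup_edge_adj_of_not_adj (h.adj k hk) hk_not).trans hi_edge.symm) with
      ⟨h₁, -⟩ | ⟨h₁, h₂⟩
    · exact hki (hinj (by simp; omega) (by simp; omega) h₁)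
    · have := hinj (by simp; omega) (by simp; omega) h₁
      have := hinj (by simp; omega) (by simp; omega) h₂
      omega
  have hdeg' : Fintype.card V + 1 ≤ G.degree (f i) + G.degree (f (i + 1)) := by
    rcases Sym2.eq_iff.1 hi_edge with ⟨h₁, h₂⟩ | ⟨h₁, h₂⟩ <;> rw [h₁, h₂] <;> omega
  obtain ⟨j, hj, hij, hij'⟩ := exists_adj_adj_succ G h.bijOn hi hdeg'
  rcases lt_trichotomy j i with hji | rfl | hji
  · exact ⟨_, isHamiltonianSeq_comp_reflectIcc (a := j + 1) h.bijOn h.map_zero h.map_pred_card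
      (fun k hk _ hki => hadj k hk hki) (by omega) (by omega) hi hij.symm hij'.symm⟩
  · exact absurd hij (G.loopless.irrefl _)
  · exact ⟨_, isHamiltonianSeq_comp_reflectIcc (a := i + 1) h.bijOn h.map_zero h.map_pred_card
      (fun k hk hka _ => hadj k hk (by omega)) (by omega) (by omega) hj hij hij'⟩

theorem exists_isHamiltonianSeq_top {x y : V} (hxy : x ≠ y) :
    ∃ f, (⊤ : SimpleGraph V).IsHamiltonianSeq f x y := by
  classical
  have : Nonempty V := ⟨x⟩
  obtain ⟨f, hf⟩ := Fintype.exists_bijOn_Iio_card V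
  have hn : 1 < Fintype.card V := Fintype.one_lt_card_iff.2 ⟨x, y, hxy⟩
  have hne : f 0 ≠ f (Fintype.card V - 1) :=
    hf.injOn.ne (by simp; omega) (by simp; omega) (by omega)
  obtain ⟨σ, hσ₀, hσ₁⟩ := Equiv.Perm.exists_apply_eq_and_apply_eq hne hxy
  exact ⟨σ ∘ f, σ.bijective.bijOn_univ.comp hf, hσ₀, hσ₁, fun k hk =>
    (top_adj _ _).2 (σ.injective.ne (hf.injOn.ne (by simp; omega) (by simp; omega) (by omega)))⟩

theorem exists_isHamiltonianSeq_of_degree (G : SimpleGraph V) [DecidableRel G.Adj]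
    (hdeg : ∀ x y : V, x ≠ y → ¬G.Adj x y → Fintype.card V + 1 ≤ G.degree x + G.degree y)
    {x y : V} (hxy : x ≠ y) : ∃ f, G.IsHamiltonianSeq f x y := by
  revert ‹DecidableRel G.Adj› hdeg
  induction G using WellFoundedGT.induction with
  | _ G ih =>
  intro _ hdeg
  by_cases htop : G = ⊤
  · subst htop
    exact exists_isHamiltonianSeq_top hxy
  obtain ⟨u, v, huv, huv_not⟩ : ∃ u v, u ≠ v ∧ ¬G.Adj u v := by
    contrapose! htop
    ext a b
    exact ⟨G.ne_of_adj, htop a b⟩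
  classical
  have hle : G ≤ G ⊔ edge u v := le_sup_left
  obtain ⟨f, hf⟩ := ih _ (G.lt_sup_edge u v huv huv_not) fun a b hab hab_not =>
    (hdeg a b hab fun h => hab_not (hle h)).trans
      (add_le_add (degree_le_of_le hle) (degree_le_of_le hle))
  exact hf.exists_of_sup_edge (hdeg u v huv huv_not)

end SimpleGraph

theorem stmt_3_general {V : Type*} [Fintype V] [DecidableEq V] (G : SimpleGraph V)
    [DecidableRel G.Adj]
    (hdeg : ∀ x y : V, x ≠ y → ¬ G.Adj x y →
      Fintype.card V + 1 ≤ G.degree x + G.degree y) :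
    ∀ x y : V, x ≠ y → ∃ p : G.Walk x y, p.IsHamiltonian := by
  intro x y hxy
  obtain ⟨f, hf⟩ := G.exists_isHamiltonianSeq_of_degree hdeg hxy
  exact hf.exists_isHamiltonian_walk

/-- Ore/Pósa-type condition for Hamiltonian-connectedness: if every pair of nonadjacent
vertices `x, y` of an `n`-vertex graph (`n ≥ 3`) satisfies `deg x + deg y ≥ n + 1`,
then between any two distinct vertices there is a Hamiltonian path. -/
theorem stmt_3 {V : Type*} [Fintype V] [DecidableEq V] (G : SimpleGraph V)
    [DecidableRel G.Adj] (hn : 3 ≤ Fintype.card V)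
    (hdeg : ∀ x y : V, x ≠ y → ¬ G.Adj x y →
      Fintype.card V + 1 ≤ G.degree x + G.degree y) :
    ∀ x y : V, x ≠ y → ∃ p : G.Walk x y, p.IsHamiltonian :=
  stmt_3_general G hdeg
end

section
/- Let G be a bipartite graph with parts X and Y. Suppose M₁ is a matching in G saturating X₁ ⊆ X and Y₁ ⊆ Y, and M₂ is a matching saturating X₂ ⊆ X and Y₂ ⊆ Y with Y₂ ⊆ Y₁. Then there exists a matching M₃ in G saturating X₃ ⊆ X and Y₃ ⊆ Y with Y₃ = Y₁ and X₂ ⊆ X₃. -/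
/-!
Send each `y ∈ Y₁` to its `M₁`-partner, except on the largest set `U ⊆ Y₂` that is closed under
"follow the `M₂`-edge, then come back along the `M₁`-edge"; on `U` use the `M₂`-partner instead.
Closedness of `U` keeps the resulting map injective, and maximality of `U` means every `M₂`-edge
leaving `Y₂ \ U` lands on the `M₁`-partner of a vertex outside `U`, so all of `X₂` is still covered.
The graph of this map is the matching `M₃`.
-/

open Set

namespace Set

theorem exists_largest_subset_closed_under_preimage {α β : Type*} (s₁ s₂ : Set α) (f₁ f₂ : α → β) :
    ∃ u ⊆ s₂, (∀ a ∈ u, ∀ b ∈ s₁, f₁ b = f₂ a → b ∈ u) ∧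
      ∀ a ∈ s₂ \ u, ∃ b ∈ s₁ \ u, f₁ b = f₂ a := by
  set closed : Set (Set α) := {u | u ⊆ s₂ ∧ ∀ a ∈ u, ∀ b ∈ s₁, f₁ b = f₂ a → b ∈ u}
  have hU : ⋃₀ closed ∈ closed := by
    refine ⟨sUnion_subset fun u hu => hu.1, ?_⟩
    rintro a ⟨u, hu, ha⟩ b hb hab
    exact ⟨u, hu, hu.2 a ha b hb hab⟩
  refine ⟨⋃₀ closed, hU.1, hU.2, fun a ⟨ha, haU⟩ => ?_⟩
  by_contra! hback
  have hinsert : insert a (⋃₀ closed) ∈ closed := by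
    refine ⟨insert_subset ha hU.1, ?_⟩
    rintro a' (rfl | ha') b hb hab
    · exact mem_insert_of_mem _ (by_contra fun hbU => hback b ⟨hb, hbU⟩ hab)
    · exact mem_insert_of_mem _ (hU.2 a' ha' b hb hab)
  exact haU (subset_sUnion_of_mem hinsert (mem_insert a _))

theorem InjOn.exists_injOn_superset_image {α β : Type*} {s₁ s₂ : Set α} {f₁ f₂ : α → β}
    (h₁ : InjOn f₁ s₁) (h₂ : InjOn f₂ s₂) (hs : s₂ ⊆ s₁) :
    ∃ g : α → β, InjOn g s₁ ∧ f₂ '' s₂ ⊆ g '' s₁ ∧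
      ∀ a ∈ s₁, g a = f₁ a ∨ (a ∈ s₂ ∧ g a = f₂ a) := by
  classical
  obtain ⟨u, hu, hclosed, hescape⟩ := exists_largest_subset_closed_under_preimage s₁ s₂ f₁ f₂
  have hcross : ∀ a ∈ u, ∀ b ∈ s₁ \ u, f₂ a ≠ f₁ b := fun a ha b hb hab =>
    hb.2 (hclosed a ha b hb.1 hab.symm)
  refine ⟨u.piecewise f₂ f₁, ?_, ?_, fun a _ => ?_⟩
  · intro a ha b hb hab
    by_cases hau : a ∈ u <;> by_cases hbu : b ∈ u <;>
      simp only [piecewise, hau, hbu, if_true, if_false] at hab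
    · exact h₂ (hu hau) (hu hbu) hab
    · exact absurd hab (hcross a hau b ⟨hb, hbu⟩)
    · exact absurd hab.symm (hcross b hbu a ⟨ha, hau⟩)
    · exact h₁ ha hb hab
  · rintro _ ⟨a, ha, rfl⟩
    by_cases hau : a ∈ u
    · exact ⟨a, hs ha, piecewise_eq_of_mem _ _ _ hau⟩
    · obtain ⟨b, hb, hab⟩ := hescape a ⟨ha, hau⟩
      exact ⟨b, hb.1, (piecewise_eq_of_notMem _ _ _ hb.2).trans hab⟩
  · by_cases hau : a ∈ u
    · exact .inr ⟨hu hau, piecewise_eq_of_mem _ _ _ hau⟩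
    · exact .inl (piecewise_eq_of_notMem _ _ _ hau)

end Set

namespace SimpleGraph

variable {V : Type*} {G : SimpleGraph V}

theorem Subgraph.IsMatching.exists_injOn_adj {M : G.Subgraph} (hM : M.IsMatching) :
    ∃ f : V → V, InjOn f M.verts ∧ ∀ v ∈ M.verts, M.Adj v (f v) := by
  choose! f hf using fun v (hv : v ∈ M.verts) => (hM hv).exists
  exact ⟨f, fun v hv w hw hvw => hM.eq_of_adj_right (hf v hv) (hvw ▸ hf w hw), hf⟩

theorem Subgraph.IsMatching.subset_image_of_isBipartiteWith {X Y A B : Set V} {M : G.Subgraph}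
    {f : V → V} (hG : G.IsBipartiteWith X Y) (hM : M.IsMatching)
    (hf : ∀ v ∈ M.verts, M.Adj v (f v)) (hMv : M.verts = A ∪ B) (hA : A ⊆ X) :
    A ⊆ f '' B := by
  intro a ha
  have haM : a ∈ M.verts := hMv ▸ Or.inl ha
  have hfa : M.Adj a (f a) := hf a haM
  have hfaY : f a ∈ Y := hG.mem_of_mem_adj (hA ha) (M.adj_sub hfa)
  have hfaB : f a ∈ B := by
    have hfaM : f a ∈ A ∪ B := hMv ▸ M.edge_vert hfa.symm
    exact hfaM.resolve_left fun h => Set.disjoint_left.mp hG.disjoint (hA h) hfaY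
  exact ⟨f a, hfaB, hM.eq_of_adj_left (hf (f a) (hMv ▸ Or.inr hfaB)) hfa.symm⟩

theorem exists_isMatching_verts_eq_union_image {S : Set V} {g : V → V} (hg : InjOn g S)
    (hadj : ∀ v ∈ S, G.Adj v (g v)) (hd : Disjoint S (g '' S)) :
    ∃ M : G.Subgraph, M.IsMatching ∧ M.verts = S ∪ g '' S :=
  (Subgraph.IsMatching.exists_of_disjoint_sets_of_equiv hd (Equiv.Set.imageOfInjOn g S hg)
    fun v => hadj v v.2).imp fun _ h => h.symm

end SimpleGraph

theorem stmt_5_general {V : Type*} (G : SimpleGraph V) (X Y : Set V)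
    (hdisj : Disjoint X Y)
    (hbip : ∀ a b : V, G.Adj a b → (a ∈ X ∧ b ∈ Y) ∨ (a ∈ Y ∧ b ∈ X))
    (X₁ X₂ Y₁ Y₂ : Set V)
    (hX₂ : X₂ ⊆ X) (hY₁ : Y₁ ⊆ Y)
    (M₁ M₂ : G.Subgraph)
    (hM₁ : M₁.IsMatching) (hM₁v : M₁.verts = X₁ ∪ Y₁)
    (hM₂ : M₂.IsMatching) (hM₂v : M₂.verts = X₂ ∪ Y₂)
    (hY₂₁ : Y₂ ⊆ Y₁) :
    ∃ (M₃ : G.Subgraph) (X₃ : Set V), X₃ ⊆ X ∧ X₂ ⊆ X₃ ∧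
      M₃.IsMatching ∧ M₃.verts = X₃ ∪ Y₁ := by
  have hG : G.IsBipartiteWith X Y := ⟨hdisj, fun a b h => hbip a b h⟩
  obtain ⟨f₁, hf₁, hf₁adj⟩ := hM₁.exists_injOn_adj
  obtain ⟨f₂, hf₂, hf₂adj⟩ := hM₂.exists_injOn_adj
  have hY₁M : Y₁ ⊆ M₁.verts := hM₁v ▸ subset_union_right
  have hY₂M : Y₂ ⊆ M₂.verts := hM₂v ▸ subset_union_right
  obtain ⟨g, hg, hX₂g, hgf⟩ := (hf₁.mono hY₁M).exists_injOn_superset_image (hf₂.mono hY₂M) hY₂₁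
  have hgadj : ∀ y ∈ Y₁, G.Adj y (g y) := fun y hy => (hgf y hy).elim
    (fun h => h ▸ M₁.adj_sub (hf₁adj y (hY₁M hy)))
    (fun h => h.2 ▸ M₂.adj_sub (hf₂adj y (hY₂M h.1)))
  have hgX : g '' Y₁ ⊆ X :=
    image_subset_iff.2 fun y hy => hG.symm.mem_of_mem_adj (hY₁ hy) (hgadj y hy)
  obtain ⟨M₃, hM₃, hM₃v⟩ :=
    SimpleGraph.exists_isMatching_verts_eq_union_image hg hgadj (hdisj.symm.mono hY₁ hgX)
  exact ⟨M₃, g '' Y₁, hgX, (hM₂.subset_image_of_isBipartiteWith hG hf₂adj hM₂v hX₂).trans hX₂g,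
    hM₃, hM₃v.trans (union_comm _ _)⟩

/-- Exchange property of matchings in a bipartite graph: if a matching `M₁` saturates
exactly `X₁ ∪ Y₁` and a matching `M₂` saturates exactly `X₂ ∪ Y₂` with `Y₂ ⊆ Y₁`,
then some matching `M₃` saturates exactly `X₃ ∪ Y₁` for a set `X₃ ⊆ X` with `X₂ ⊆ X₃`. -/
theorem stmt_5 {V : Type*} (G : SimpleGraph V) (X Y : Set V)
    (hdisj : Disjoint X Y)
    (hbip : ∀ a b : V, G.Adj a b → (a ∈ X ∧ b ∈ Y) ∨ (a ∈ Y ∧ b ∈ X))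
    (X₁ X₂ Y₁ Y₂ : Set V)
    (hX₁ : X₁ ⊆ X) (hX₂ : X₂ ⊆ X) (hY₁ : Y₁ ⊆ Y) (hY₂ : Y₂ ⊆ Y)
    (M₁ M₂ : G.Subgraph)
    (hM₁ : M₁.IsMatching) (hM₁v : M₁.verts = X₁ ∪ Y₁)
    (hM₂ : M₂.IsMatching) (hM₂v : M₂.verts = X₂ ∪ Y₂)
    (hY₂₁ : Y₂ ⊆ Y₁) :
    ∃ (M₃ : G.Subgraph) (X₃ : Set V), X₃ ⊆ X ∧ X₂ ⊆ X₃ ∧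
      M₃.IsMatching ∧ M₃.verts = X₃ ∪ Y₁ :=
  stmt_5_general G X Y hdisj hbip X₁ X₂ Y₁ Y₂ hX₂ hY₁ M₁ M₂ hM₁ hM₁v hM₂ hM₂v hY₂₁
end

section
/- Let n, d be integers with 1 ≤ d ≤ ⌊(n-1)/2⌋, and set h(n,d) := C(n-d, 2) + d². If G is a nonhamiltonian graph on n vertices with minimum degree at least d, then e(G) ≤ max{h(n,d), h(n, ⌊(n-1)/2⌋)}. -/
/-!
Pass to an edge-maximal nonhamiltonian supergraph `H` of `G`. Adding a missing edge `uv` to `H`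
creates a Hamiltonian cycle, so `H` has a Hamiltonian path from `u` to `v`, and Pósa's rotation
gives `deg u + deg v ≤ n - 1`. Choose the missing edge `uv` with the largest degree sum and
`k = deg u ≤ deg v`. The predecessors along the path of the `k` neighbours of `u` are not adjacent
to `v`, so they have degree at most `k`; every vertex of degree at least `n - k` is a neighbour of
`u`, so there are at most `k` of them. Summing degrees gives `e(H) ≤ h(n, k) = erdosBound n k`
with `d ≤ k ≤ ⌊(n-1)/2⌋`, and `h(n, ·)` is a convex quadratic, so it is largest at an endpoint.
-/

open Finset

def erdosBound (n k : ℕ) : ℕ := (n - k).choose 2 + k ^ 2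

lemma cast_erdosBound {n k : ℕ} (hk : k ≤ n) :
    (erdosBound n k : ℚ) = (n - k) * (n - k - 1) / 2 + k ^ 2 := by
  rw [erdosBound, Nat.cast_add, Nat.cast_choose_two, Nat.cast_sub hk]
  push_cast
  ring

lemma erdosBound_le_max {n d k K : ℕ} (hdk : d ≤ k) (hkK : k ≤ K) (hK : K ≤ n) :
    erdosBound n k ≤ max (erdosBound n d) (erdosBound n K) := by
  rcases hdk.eq_or_lt with rfl | hdk'
  · exact le_max_left _ _
  have hdK : (0 : ℚ) < K - d := sub_pos.mpr (by exact_mod_cast hdk'.trans_le hkK)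
  have hkd : (0 : ℚ) ≤ k - d := sub_nonneg.mpr (by exact_mod_cast hdk)
  have hKk : (0 : ℚ) ≤ K - k := sub_nonneg.mpr (by exact_mod_cast hkK)
  rw [← Nat.cast_le (α := ℚ), Nat.cast_max]
  set M := max (erdosBound n d : ℚ) (erdosBound n K)
  have key : ((K : ℚ) - d) * erdosBound n k ≤ (K - d) * M := calc
    _ ≤ (K - k) * (erdosBound n d : ℚ) + (k - d) * erdosBound n K := by
      rw [cast_erdosBound (by omega), cast_erdosBound (by omega), cast_erdosBound hK]
      -- the chord inequality for a quadratic with leading coefficient `3 / 2`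
      nlinarith [mul_nonneg (mul_nonneg hkd hKk) hdK.le]
    _ ≤ (K - k) * M + (k - d) * M := by gcongr <;> simp [M]
    _ = (K - d) * M := by ring
  exact le_of_mul_le_mul_left key hdK

namespace SimpleGraph

variable {V : Type*} {G : SimpleGraph V}

lemma Walk.IsPath.end_notMem_dropLast_support {u v : V} {p : G.Walk u v} (hp : p.IsPath) :
    v ∉ p.support.dropLast := by
  have := hp.support_nodup
  rw [← List.dropLast_append_getLast p.support_ne_nil, getLast_support] at this
  exact fun h => (List.nodup_append.mp this).2.2 _ h _ (List.mem_singleton_self v) rfl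

lemma card_edgeFinset_le_erdosBound [Fintype V] [DecidableRel G.Adj] {k : ℕ} (P : Finset V)
    (hP : #P = k) (hPdeg : ∀ w ∈ P, G.degree w ≤ k)
    (hQ : #{w | Fintype.card V - k ≤ G.degree w} ≤ k) :
    #G.edgeFinset ≤ erdosBound (Fintype.card V) k := by
  classical
  set n := Fintype.card V
  have hdeg : ∀ w, G.degree w ≤ n - k - 1 + if n - k ≤ G.degree w then k else 0 := by
    intro w
    have := G.degree_lt_card_verts w
    split_ifs <;> omega
  have hsumP : ∑ w ∈ P, G.degree w ≤ k * k :=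
    (sum_le_sum hPdeg).trans_eq (by rw [sum_const, hP, smul_eq_mul])
  have hsumPc : ∑ w ∈ Pᶜ, G.degree w ≤ (n - k) * (n - k - 1) + k * k := calc
    _ ≤ ∑ w ∈ Pᶜ, (n - k - 1 + if n - k ≤ G.degree w then k else 0) :=
      sum_le_sum fun w _ => hdeg w
    _ = (n - k) * (n - k - 1) + #{w ∈ Pᶜ | n - k ≤ G.degree w} * k := by
      rw [sum_add_distrib, sum_const, card_compl, hP, smul_eq_mul, ← sum_filter, sum_const,
        smul_eq_mul]
    _ ≤ (n - k) * (n - k - 1) + k * k := by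
      gcongr
      exact (card_le_card (filter_subset_filter _ (subset_univ _))).trans hQ
  have hchoose : 2 * (n - k).choose 2 = (n - k) * (n - k - 1) := by
    rw [Nat.choose_two_right, Nat.mul_div_cancel' (Nat.even_mul_pred_self _).two_dvd]
  have hsum := G.sum_degrees_eq_twice_card_edges
  rw [← sum_add_sum_compl P] at hsum
  rw [erdosBound]
  nlinarith

lemma exists_not_adj_forall_degree_add_le [Fintype V] [DecidableRel G.Adj] (hG : G ≠ ⊤) :
    ∃ u v, u ≠ v ∧ ¬G.Adj u v ∧ G.degree u ≤ G.degree v ∧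
      ∀ x y, x ≠ y → ¬G.Adj x y → G.degree x + G.degree y ≤ G.degree u + G.degree v := by
  classical
  obtain ⟨a, b, hab, hadj⟩ := ne_top_iff_exists_not_adj.mp hG
  obtain ⟨⟨x, y⟩, hxy, hmax⟩ := exists_max_image {p : V × V | p.1 ≠ p.2 ∧ ¬G.Adj p.1 p.2}
    (fun p => G.degree p.1 + G.degree p.2) ⟨(a, b), by simp [hab, hadj]⟩
  simp only [mem_filter, mem_univ, true_and] at hxy
  have hmax' : ∀ a b, a ≠ b → ¬G.Adj a b → G.degree a + G.degree b ≤ G.degree x + G.degree y :=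
    fun a b hab hadj => hmax (a, b) (by simp [hab, hadj])
  rcases le_total (G.degree x) (G.degree y) with h | h
  · exact ⟨x, y, hxy.1, hxy.2, h, hmax'⟩
  · exact ⟨y, x, hxy.1.symm, fun h' => hxy.2 h'.symm, h,
      fun a b hab hadj => (hmax' a b hab hadj).trans_eq (add_comm _ _)⟩

variable [DecidableEq V]

namespace Walk

variable {u v x y : V}

lemma IsHamiltonian.of_support_perm {p : G.Walk u v} {q : G.Walk x y} (hp : p.IsHamiltonian)
    (h : p.support.Perm q.support) : q.IsHamiltonian :=
  fun w => h.count_eq w ▸ hp w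

lemma IsHamiltonian.reverse {p : G.Walk u v} (hp : p.IsHamiltonian) : p.reverse.IsHamiltonian :=
  hp.of_support_perm (by simp [(List.reverse_perm _).symm])

lemma IsHamiltonian.isHamiltonian_of_adj [Fintype V] {p : G.Walk u v} (hp : p.IsHamiltonian)
    (hvu : G.Adj v u) (h3 : 3 ≤ Fintype.card V) : G.IsHamiltonian := by
  have hlen : p.length ≠ 1 := by rw [hp.length_eq]; omega
  have hcyc : (cons hvu p).IsCycle := (cons_isCycle_iff p hvu).mpr
    ⟨hp.isPath, fun h => hlen (hp.isPath.length_eq_one_of_mem_edges (Sym2.eq_swap ▸ h))⟩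
  exact fun _ => ⟨v, cons hvu p,
    isHamiltonianCycle_iff_isCycle_and_support_count_tail_eq_one.mpr
      ⟨hcyc, fun w => by simpa using hp w⟩⟩

/-- Pósa's rotation: the path `u … x y … v` with `u ~ y` and `v ~ x` closes up to the
Hamiltonian cycle `x … u y … v x`. -/
lemma IsHamiltonian.isHamiltonian_of_adj_of_mem_darts [Fintype V] {p : G.Walk u v}
    (hp : p.IsHamiltonian) {d : G.Dart} (hd : d ∈ p.darts) (hu : G.Adj u d.snd)
    (hv : G.Adj v d.fst) (h3 : 3 ≤ Fintype.card V) : G.IsHamiltonian := by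
  obtain ⟨q₁, q₂, rfl⟩ := (isSubwalk_toWalk_adj_iff_mem_darts p).mpr hd
  refine (hp.of_support_perm (q := q₂.reverse.append (cons hu.symm q₁)) ?_).isHamiltonian_of_adj
    hv.symm h3
  simp only [support_append, support_cons, support_nil, List.tail_cons, List.append_assoc,
    List.cons_append, List.nil_append, cons_tail_support, support_reverse]
  exact List.perm_append_comm.trans ((List.reverse_perm _).symm.append_right _)

lemma IsHamiltonian.exists_finset_not_adj [Fintype V] [DecidableRel G.Adj]
    (hG : ¬G.IsHamiltonian) (h3 : 3 ≤ Fintype.card V) {p : G.Walk u v} (hp : p.IsHamiltonian) :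
    ∃ P : Finset V, #P = G.degree u ∧ ∀ w ∈ P, w ≠ v ∧ ¬G.Adj v w := by
  -- `P` consists of the predecessors along `p` of the neighbours of `u`
  set D := p.darts.filter (fun d => G.Adj u d.snd)
  refine ⟨(D.map (·.fst)).toFinset, ?_, fun w hw => ?_⟩
  · have hfst : (D.map (·.fst)).Nodup := by
      refine (hp.isPath.support_nodup.sublist p.support.dropLast_sublist).sublist ?_
      rw [← map_fst_darts]
      exact List.filter_sublist.map _
    have hsnd : D.map (·.snd) = p.support.tail.filter (G.Adj u) := by
      rw [← map_snd_darts, List.filter_map]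
      rfl
    have htail : (p.support.tail.filter (G.Adj u)).toFinset = G.neighborFinset u := by
      ext w
      have hw := hp.mem_support w
      rw [← p.cons_tail_support, List.mem_cons] at hw
      simp only [List.toFinset_filter, decide_eq_true_eq, mem_filter, List.mem_toFinset,
        mem_neighborFinset]
      exact ⟨And.right, fun h => ⟨hw.resolve_left h.ne', h⟩⟩
    rw [List.toFinset_card_of_nodup hfst, List.length_map, ← List.length_map (f := (·.snd)), hsnd,
      ← List.toFinset_card_of_nodup
        ((hp.isPath.support_nodup.sublist (List.tail_sublist _)).filter _),
      htail, card_neighborFinset_eq_degree]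
  · obtain ⟨d, hd, rfl⟩ := List.mem_map.mp (List.mem_toFinset.mp hw)
    obtain ⟨hd, hdu⟩ := List.mem_filter.mp hd
    refine ⟨fun h => hp.isPath.end_notMem_dropLast_support ?_, fun h => hG ?_⟩
    · simpa [h, map_fst_darts] using List.mem_map_of_mem (f := (·.fst)) hd
    · exact hp.isHamiltonian_of_adj_of_mem_darts hd (by simpa using hdu) h h3

lemma IsHamiltonian.degree_add_degree_le [Fintype V] [DecidableRel G.Adj]
    (hG : ¬G.IsHamiltonian) (h3 : 3 ≤ Fintype.card V) {p : G.Walk u v} (hp : p.IsHamiltonian) :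
    G.degree u + G.degree v ≤ Fintype.card V - 1 := by
  obtain ⟨P, hPcard, hP⟩ := hp.exists_finset_not_adj hG h3
  have hdisj : Disjoint P (G.neighborFinset v) :=
    Finset.disjoint_left.mpr fun w hw hvw => (hP w hw).2 ((mem_neighborFinset _ _ _).mp hvw)
  have hsub : P ∪ G.neighborFinset v ⊆ univ.erase v := by
    intro w hw
    rcases mem_union.mp hw with hw | hw
    · exact mem_erase.mpr ⟨(hP w hw).1, mem_univ w⟩
    · exact mem_erase.mpr ⟨(G.ne_of_adj ((mem_neighborFinset _ _ _).mp hw)).symm, mem_univ w⟩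
  have := card_le_card hsub
  rwa [card_union_of_disjoint hdisj, hPcard, card_neighborFinset_eq_degree,
    card_erase_of_mem (mem_univ v), card_univ] at this

end Walk

lemma isHamiltonian_top [Fintype V] (h3 : 3 ≤ Fintype.card V) :
    (⊤ : SimpleGraph V).IsHamiltonian := by
  obtain ⟨m, hm⟩ : ∃ m, Fintype.card V = m + 3 := ⟨_, (Nat.sub_add_cancel h3).symm⟩
  let e := (Fintype.equivFinOfCardEq hm).symm
  let f : cycleGraph (m + 3) →g (⊤ : SimpleGraph V) := ⟨e, fun h => by simpa using h.ne⟩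
  refine fun _ => ⟨e 0, (cycleGraph.cycle m).map f, ?_⟩
  rw [Walk.isHamiltonianCycle_iff_isCycle_and_length_eq]
  exact ⟨cycleGraph.isCycle_cycle.map e.injective, by simp [cycleGraph.length_cycle, hm]⟩

/-- The Hamiltonian cycle of `G ⊔ edge u v` must use the new edge; deleting it leaves the path. -/
lemma exists_isHamiltonian_walk_of_isHamiltonian_sup_edge [Fintype V] {u v : V}
    (hG : ¬G.IsHamiltonian) (h : (G ⊔ edge u v).IsHamiltonian) :
    ∃ p : G.Walk u v, p.IsHamiltonian := by
  have hne : u ≠ v := by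
    rintro rfl
    exact hG (by simpa using h)
  obtain ⟨a, c, hc⟩ := h fun h1 => hG (IsHamiltonian.of_card_eq_one h1)
  have hG' : ∀ {x y} (q : (G ⊔ edge u v).Walk x y), s(u, v) ∉ q.edges →
      ∀ e ∈ q.edges, e ∈ G.edgeSet := by
    intro x y q hq e he
    have := q.edges_subset_edgeSet he
    rw [edgeSet_sup, edgeSet_edge_of_ne hne] at this
    exact this.resolve_right (by rintro rfl; exact hq he)
  have huv : s(u, v) ∈ c.edges := by
    by_contra huv
    refine hG fun _ => ⟨a, c.transfer G (hG' c huv), ?_⟩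
    rw [Walk.isHamiltonianCycle_iff_isCycle_and_length_eq, Walk.length_transfer]
    exact ⟨hc.isCycle.transfer _, hc.length_eq⟩
  obtain ⟨⟨⟨x, y⟩, hxy⟩, hd, hdeq⟩ := List.mem_map.mp huv
  rw [Dart.edge_mk] at hdeq
  obtain ⟨q₁, q₂, rfl⟩ := (Walk.isSubwalk_toWalk_adj_iff_mem_darts c).mpr hd
  set r := q₂.append q₁
  have hr : r.IsHamiltonian := by
    refine hc.isHamiltonian_tail.of_support_perm ?_
    rw [Walk.support_tail_of_not_nil _ hc.not_nil]
    simpa [r, Walk.support_append] using List.perm_append_comm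
  have hrG : s(u, v) ∉ r.edges := by
    have := hc.edges_nodup
    simp only [Walk.edges_append, Walk.edges_cons, Walk.edges_nil, List.append_assoc,
      List.cons_append, List.nil_append, List.nodup_middle, List.nodup_cons, List.mem_append,
      not_or, ← hdeq, r] at this ⊢
    exact this.1.symm
  have hrG' : (r.transfer G (hG' r hrG)).IsHamiltonian :=
    fun w => by simpa only [Walk.support_transfer] using hr w
  rcases Sym2.eq_iff.mp hdeq with ⟨rfl, rfl⟩ | ⟨rfl, rfl⟩
  · exact ⟨_, hrG'.reverse⟩
  · exact ⟨_, hrG'⟩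

lemma exists_isHamiltonian_walk_of_maximal [Fintype V]
    (hG : Maximal (fun F : SimpleGraph V => ¬F.IsHamiltonian) G) {u v : V} (hne : u ≠ v)
    (huv : ¬G.Adj u v) :
    ∃ p : G.Walk u v, p.IsHamiltonian :=
  exists_isHamiltonian_walk_of_isHamiltonian_sup_edge hG.1
    (not_not.mp (hG.not_prop_of_gt (lt_sup_edge G u v hne huv)))

lemma exists_two_mul_degree_lt_and_card_edgeFinset_le [Fintype V] [DecidableRel G.Adj]
    (hG : Maximal (fun F : SimpleGraph V => ¬F.IsHamiltonian) G) (h3 : 3 ≤ Fintype.card V) :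
    ∃ u, 2 * G.degree u < Fintype.card V ∧
      #G.edgeFinset ≤ erdosBound (Fintype.card V) (G.degree u) := by
  have hore : ∀ x y, x ≠ y → ¬G.Adj x y → G.degree x + G.degree y ≤ Fintype.card V - 1 :=
    fun x y hne hxy => by
      obtain ⟨p, hp⟩ := exists_isHamiltonian_walk_of_maximal hG hne hxy
      exact hp.degree_add_degree_le hG.1 h3
  obtain ⟨u, v, hne, huv, hle, hmax⟩ :=
    exists_not_adj_forall_degree_add_le (G := G) fun h => hG.1 (h ▸ isHamiltonian_top h3)
  have hk := hore u v hne huv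
  obtain ⟨p, hp⟩ := exists_isHamiltonian_walk_of_maximal hG hne huv
  obtain ⟨P, hPcard, hP⟩ := hp.exists_finset_not_adj hG.1 h3
  refine ⟨u, by omega, card_edgeFinset_le_erdosBound P hPcard (fun w hw => ?_) ?_⟩
  · have := hmax w v (hP w hw).1 fun h => (hP w hw).2 h.symm
    omega
  · refine (card_le_card fun w hw => ?_).trans (card_neighborFinset_eq_degree G u).le
    rw [mem_filter] at hw
    rw [mem_neighborFinset]
    by_contra huw
    have hwu : u ≠ w := by
      rintro rfl
      omega
    have := hore u w hwu huw
    omega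

end SimpleGraph

/-- Erdős' theorem: let `1 ≤ d ≤ ⌊(n-1)/2⌋` and `h(n,d) = C(n-d,2) + d²`. If `G` is a
nonhamiltonian graph on `n` vertices with minimum degree at least `d`, then
`e(G) ≤ max (h n d) (h n ⌊(n-1)/2⌋)`. -/
theorem stmt_6 {V : Type*} [Fintype V] [DecidableEq V] (G : SimpleGraph V)
    [DecidableRel G.Adj] (n d : ℕ) (hn : Fintype.card V = n)
    (hd1 : 1 ≤ d) (hd2 : d ≤ (n - 1) / 2)
    (hham : ¬ G.IsHamiltonian)
    (hδ : ∀ v : V, d ≤ G.degree v) :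
    G.edgeFinset.card ≤
      max ((n - d).choose 2 + d ^ 2) ((n - (n - 1) / 2).choose 2 + ((n - 1) / 2) ^ 2) := by
  classical
  obtain ⟨H, hGH, hH⟩ := Finite.exists_le_maximal (p := fun F : SimpleGraph V => ¬F.IsHamiltonian)
    hham
  obtain ⟨u, hu, hHe⟩ := SimpleGraph.exists_two_mul_degree_lt_and_card_edgeFinset_le hH (by omega)
  rw [hn] at hu hHe
  calc #G.edgeFinset ≤ #H.edgeFinset := card_le_card (SimpleGraph.edgeFinset_mono hGH)
    _ ≤ erdosBound n (H.degree u) := hHe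
    _ ≤ max (erdosBound n d) (erdosBound n ((n - 1) / 2)) :=
      erdosBound_le_max ((hδ u).trans (SimpleGraph.degree_le_of_le hGH)) (by omega) (by omega)
end

section
/- Let k ≥ 3, n = 2k+1, and let G be a 2-connected nonhamiltonian n-vertex graph with δ(G) ≥ k whose longest cycle C has length 2k. If v is the vertex not on C, then v has exactly k neighbors on C, no two consecutive, and the k+1 vertices of C not adjacent to v together with v form an independent set. -/
/-!
If `v` is adjacent to `f a` and `f b` and `f (a+1) ~ f (b+1)`, then
`v, f b, f (b-1), …, f (a+1), f (b+1), …, f a, v` is a cycle of length `2k+1`, contradicting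
maximality. For `b = a+1` this forbids consecutive neighbours, so the neighbour indices `S` of `v`
(all neighbours lie on `C`, hence `|S| ≥ k`) and `S + 1` are disjoint in `ZMod (2k)`: thus
`|S| = k` and `S + 1` is the complement of `S`. Two adjacent non-neighbours `f a`, `f b` then give
the forbidden configuration at `a - 1`, `b - 1`.
-/

open Finset Function

theorem Finset.two_mul_card_le_of_disjoint_map {α : Type*} [Fintype α] [DecidableEq α]
    {s : Finset α} (e : α ↪ α) (h : Disjoint s (s.map e)) : 2 * #s ≤ Fintype.card α := by
  have := card_le_univ (s ∪ s.map e)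
  rw [card_union_of_disjoint h, card_map] at this
  omega

theorem Finset.mem_map_of_disjoint_map_of_two_mul_card_eq {α : Type*} [Fintype α]
    [DecidableEq α] {s : Finset α} (e : α ↪ α) (h : Disjoint s (s.map e))
    (hcard : 2 * #s = Fintype.card α) {b : α} (hb : b ∉ s) : b ∈ s.map e := by
  have hunion : s ∪ s.map e = univ := by
    apply eq_univ_of_card
    rw [card_union_of_disjoint h, card_map]
    omega
  have hb' : b ∈ s ∪ s.map e := hunion ▸ mem_univ b
  simpa [hb] using hb'

theorem mem_range_of_card_eq_card_add_one {α V : Type*} [Fintype α] [Fintype V]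
    {f : α → V} (hf : Injective f) (hcard : Fintype.card V = Fintype.card α + 1)
    {v : V} (hv : v ∉ Set.range f) {u : V} (hu : u ≠ v) : u ∈ Set.range f := by
  classical
  by_contra hu'
  have hv' : v ∉ univ.map ⟨f, hf⟩ := by simpa using hv
  have hu'' : u ∉ insert v (univ.map ⟨f, hf⟩) := by simpa [hu] using hu'
  have := card_le_univ (insert u (insert v (univ.map ⟨f, hf⟩)))
  rw [card_insert_of_notMem hu'', card_insert_of_notMem hv', card_map, card_univ] at this
  omega

namespace SimpleGraph

variable {V : Type*} {G : SimpleGraph V}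

theorem degree_eq_card_filter_adj_comp [Fintype V] [DecidableRel G.Adj] {α : Type*}
    [Fintype α] {f : α → V} (hf : Injective f) {v : V}
    (hrange : ∀ u, G.Adj v u → u ∈ Set.range f) :
    G.degree v = #{i | G.Adj v (f i)} := by
  classical
  rw [← card_neighborFinset_eq_degree, ← card_map ⟨f, hf⟩]
  congr 1
  ext u
  simp only [mem_neighborFinset, mem_map, mem_filter, mem_univ, true_and,
    Embedding.coeFn_mk]
  constructor
  · intro hu
    obtain ⟨i, rfl⟩ := hrange u hu
    exact ⟨i, hu, rfl⟩
  · rintro ⟨i, hi, rfl⟩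
    exact hi

theorem exists_cycle_of_closed_path {ℓ : ℕ} [NeZero ℓ] (p : ℕ → V)
    (hinj : ∀ j < ℓ, ∀ j' < ℓ, p j = p j' → j = j')
    (hadj : ∀ j, j + 1 < ℓ → G.Adj (p j) (p (j + 1)))
    (hclose : G.Adj (p (ℓ - 1)) (p 0)) :
    ∃ g : ZMod ℓ → V, Injective g ∧ ∀ i, G.Adj (g i) (g (i + 1)) := by
  refine ⟨fun i => p i.val, fun i i' h => ZMod.val_injective ℓ
    (hinj _ i.val_lt _ i'.val_lt h), fun i => ?_⟩
  obtain ⟨j, hj, rfl⟩ : ∃ j < ℓ, (j : ZMod ℓ) = i :=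
    ⟨i.val, i.val_lt, i.natCast_zmod_val⟩
  dsimp only
  rw [← Nat.cast_succ, ZMod.val_natCast_of_lt hj]
  rcases (Nat.succ_le_of_lt hj).lt_or_eq with hj' | hj'
  · rw [ZMod.val_natCast_of_lt hj']
    exact hadj j hj'
  · rw [hj', ZMod.natCast_self, ZMod.val_zero, show j = ℓ - 1 by omega]
    exact hclose

variable {m : ℕ} [NeZero m] {f : ZMod m → V} {v : V}

theorem exists_longer_cycle_of_chord_zero (hf : Injective f)
    (hcyc : ∀ i, G.Adj (f i) (f (i + 1))) (hv : v ∉ Set.range f) {t : ℕ} (ht : 0 < t)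
    (htm : t < m) (hlast : G.Adj v (f (-1))) (hprev : G.Adj v (f ((t - 1 : ℕ))))
    (hchord : G.Adj (f 0) (f t)) :
    ∃ g : ZMod (m + 1) → V, Injective g ∧ ∀ i, G.Adj (g i) (g (i + 1)) := by
  -- the cycle `v, f (t-1), …, f 0, f t, …, f (m-1), v`
  set σ : ℕ → ℕ := fun j => if j < t then t - 1 - j else j with hσ
  set p : ℕ → V := fun j => if j = m then v else f (σ j) with hp
  have hσ_lt : ∀ j < m, σ j < m := by
    intro j hj
    simp only [hσ]
    split_ifs <;> omega
  have hσ_inj : ∀ j < m, ∀ j' < m, σ j = σ j' → j = j' := by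
    intro j _ j' _
    simp only [hσ]
    split_ifs <;> omega
  have hp_lt : ∀ j < m, p j = f (σ j) := fun j hj => if_neg hj.ne
  apply exists_cycle_of_closed_path p
  · intro j hj j' hj' h
    simp only [hp] at h
    split_ifs at h with h₁ h₂ h₂
    · omega
    · exact absurd ⟨_, h.symm⟩ hv
    · exact absurd ⟨_, h⟩ hv
    · have h' := hf h
      rw [ZMod.natCast_eq_natCast_iff', Nat.mod_eq_of_lt (hσ_lt j (by omega)),
        Nat.mod_eq_of_lt (hσ_lt j' (by omega))] at h'
      exact hσ_inj j (by omega) j' (by omega) h'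
  · intro j hj
    rcases (Nat.le_of_lt_succ hj).lt_or_eq with hj' | hj'
    · rw [hp_lt j (by omega), hp_lt (j + 1) hj']
      simp only [hσ]
      rcases lt_trichotomy (j + 1) t with hjt | hjt | hjt
      · rw [if_pos (by omega), if_pos hjt, show t - 1 - j = t - 1 - (j + 1) + 1 by omega,
          Nat.cast_succ]
        exact (hcyc _).symm
      · rw [if_pos (by omega), if_neg (by omega), show t - 1 - j = 0 by omega, hjt,
          Nat.cast_zero]
        exact hchord
      · rw [if_neg (by omega), if_neg (by omega), Nat.cast_succ]
        exact hcyc _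
    · have hm : ((m - 1 : ℕ) : ZMod m) = -1 := by
        rw [Nat.cast_sub (NeZero.one_le), ZMod.natCast_self, Nat.cast_one, zero_sub]
      rw [hp_lt j (by omega), hj', show p m = v from if_pos rfl]
      simp only [hσ]
      rw [if_neg (by omega), show j = m - 1 by omega, hm]
      exact hlast.symm
  · rw [Nat.add_sub_cancel, show p m = v from if_pos rfl, hp_lt 0 (NeZero.pos m)]
    simp only [hσ]
    rwa [if_pos ht, Nat.sub_zero]

theorem exists_longer_cycle_of_crossing_chord (hf : Injective f)
    (hcyc : ∀ i, G.Adj (f i) (f (i + 1))) (hv : v ∉ Set.range f) {a b : ZMod m}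
    (hab : a ≠ b) (ha : G.Adj v (f a)) (hb : G.Adj v (f b))
    (hchord : G.Adj (f (a + 1)) (f (b + 1))) :
    ∃ g : ZMod (m + 1) → V, Injective g ∧ ∀ i, G.Adj (g i) (g (i + 1)) := by
  have ht : 0 < (b - a).val := ZMod.val_pos.mpr (sub_ne_zero.mpr hab.symm)
  have hprev : (((b - a).val - 1 : ℕ) : ZMod m) + (a + 1) = b := by
    rw [Nat.cast_pred ht, ZMod.natCast_zmod_val]
    ring
  refine exists_longer_cycle_of_chord_zero (f := fun i => f (i + (a + 1))) (v := v)
    (hf.comp (add_left_injective _)) (fun i => ?_) ?_ ht (b - a).val_lt ?_ ?_ ?_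
  · simpa only [add_right_comm] using hcyc (i + (a + 1))
  · rintro ⟨i, hi⟩
    exact hv ⟨_, hi⟩
  · rwa [show -1 + (a + 1) = a by ring]
  · simpa only [hprev] using hb
  · rwa [zero_add, ZMod.natCast_zmod_val, show b - a + (a + 1) = b + 1 by ring]

end SimpleGraph

open SimpleGraph in
theorem stmt_8_general {V : Type*} [Fintype V] [DecidableEq V] (G : SimpleGraph V)
    [DecidableRel G.Adj] (k : ℕ) (hk : 3 ≤ k)
    (hn : Fintype.card V = 2 * k + 1)
    (hδ : ∀ u : V, k ≤ G.degree u)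
    (f : ZMod (2 * k) → V) (hf : Function.Injective f)
    (hcyc : ∀ i, G.Adj (f i) (f (i + 1)))
    (hlongest : ∀ (ℓ : ℕ) (g : ZMod ℓ → V), Function.Injective g →
      (∀ i, G.Adj (g i) (g (i + 1))) → ℓ ≤ 2 * k)
    (v : V) (hv : v ∉ Set.range f) :
    {i : ZMod (2 * k) | G.Adj v (f i)}.ncard = k ∧
    (∀ i : ZMod (2 * k), ¬ (G.Adj v (f i) ∧ G.Adj v (f (i + 1)))) ∧
    (∀ a ∈ {v} ∪ {x : V | ∃ i, x = f i ∧ ¬ G.Adj v (f i)},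
      ∀ b ∈ {v} ∪ {x : V | ∃ i, x = f i ∧ ¬ G.Adj v (f i)}, ¬ G.Adj a b) := by
  have : NeZero (2 * k) := ⟨by omega⟩
  have : Fact (1 < 2 * k) := ⟨by omega⟩
  have no_longer : ¬ ∃ g : ZMod (2 * k + 1) → V, Function.Injective g ∧
      ∀ i, G.Adj (g i) (g (i + 1)) := fun ⟨g, hg, hadj⟩ => by
    have := hlongest _ g hg hadj
    omega
  have no_consec (i : ZMod (2 * k)) : ¬ (G.Adj v (f i) ∧ G.Adj v (f (i + 1))) :=
    fun ⟨h₁, h₂⟩ => no_longer <| exists_longer_cycle_of_crossing_chord hf hcyc hv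
      (by simp) h₁ h₂ (hcyc _)
  set S : Finset (ZMod (2 * k)) := {i | G.Adj v (f i)}
  have hdisj : Disjoint S (S.map (Equiv.addRight 1).toEmbedding) := by
    simp only [S, Finset.disjoint_left, mem_map, mem_filter, mem_univ, true_and]
    rintro _ hi ⟨j, hj, rfl⟩
    exact no_consec j ⟨hj, hi⟩
  have hdeg : G.degree v = #S := degree_eq_card_filter_adj_comp hf fun u hu =>
    mem_range_of_card_eq_card_add_one hf (by rw [hn, ZMod.card]) hv (G.ne_of_adj hu).symm
  have hcard : 2 * #S = Fintype.card (ZMod (2 * k)) := by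
    have := two_mul_card_le_of_disjoint_map _ hdisj
    have := hδ v
    rw [ZMod.card] at *
    omega
  have hpred (b : ZMod (2 * k)) (hb : ¬ G.Adj v (f b)) : G.Adj v (f (b - 1)) := by
    obtain ⟨a, ha, rfl⟩ := mem_map.mp <|
      mem_map_of_disjoint_map_of_two_mul_card_eq _ hdisj hcard (by simpa [S] using hb)
    simpa [S] using ha
  refine ⟨?_, no_consec, ?_⟩
  · rw [show {i | G.Adj v (f i)} = (S : Set (ZMod (2 * k))) by simp [S], Set.ncard_coe_finset]
    rw [ZMod.card] at hcard
    omega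
  · rintro a (rfl | ⟨i, rfl, hi⟩) b (rfl | ⟨j, rfl, hj⟩) hab
    · exact G.irrefl hab
    · exact hj hab
    · exact hi hab.symm
    · have hij : i - 1 ≠ j - 1 := fun h => hab.ne (congrArg f (sub_left_inj.mp h))
      exact no_longer <| exists_longer_cycle_of_crossing_chord hf hcyc hv hij (hpred i hi)
        (hpred j hj) (by simpa using hab)

/-- Let `k ≥ 3`, `n = 2k+1`, and `G` a 2-connected nonhamiltonian `n`-vertex graph with
minimum degree at least `k`, whose longest cycle `C` (given by an injective cyclic map
`f : ZMod (2k) → V`) has length `2k`. If `v` is the vertex off `C`, then `v` has exactly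
`k` neighbors on `C`, no two of them consecutive, and the vertices of `C` not adjacent
to `v` together with `v` form an independent set. -/
theorem stmt_8 {V : Type*} [Fintype V] [DecidableEq V] (G : SimpleGraph V)
    [DecidableRel G.Adj] (k : ℕ) (hk : 3 ≤ k)
    (hn : Fintype.card V = 2 * k + 1)
    (h2conn : 3 ≤ Fintype.card V ∧ ∀ u : V, (G.induce {w : V | w ≠ u}).Connected)
    (hham : ¬ G.IsHamiltonian)
    (hδ : ∀ u : V, k ≤ G.degree u)
    (f : ZMod (2 * k) → V) (hf : Function.Injective f)
    (hcyc : ∀ i, G.Adj (f i) (f (i + 1)))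
    (hlongest : ∀ (ℓ : ℕ) (g : ZMod ℓ → V), Function.Injective g →
      (∀ i, G.Adj (g i) (g (i + 1))) → ℓ ≤ 2 * k)
    (v : V) (hv : v ∉ Set.range f) :
    {i : ZMod (2 * k) | G.Adj v (f i)}.ncard = k ∧
    (∀ i : ZMod (2 * k), ¬ (G.Adj v (f i) ∧ G.Adj v (f (i + 1)))) ∧
    (∀ a ∈ {v} ∪ {x : V | ∃ i, x = f i ∧ ¬ G.Adj v (f i)},
      ∀ b ∈ {v} ∪ {x : V | ∃ i, x = f i ∧ ¬ G.Adj v (f i)}, ¬ G.Adj a b) :=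
  stmt_8_general G k hk hn hδ f hf hcyc hlongest v hv
end

section
/- For odd n, the n-vertex hypergraph consisting of all subsets of [(n+1)/2] together with all subsets of {(n+1)/2, ..., n} has minimum degree 2^((n-1)/2) and contains no Berge Hamiltonian cycle. -/
/-- The degree of a vertex `v` in a hypergraph `H`: the number of hyperedges containing `v`. -/
def hDegree {V : Type*} [DecidableEq V] (H : Finset (Finset V)) (v : V) : ℕ :=
  (H.filter (fun e => v ∈ e)).card

/-- `H` has a Berge cycle of length `ℓ`: there are `ℓ` distinct vertices `v i` and `ℓ`
distinct hyperedges `e i` with `v i, v (i+1) ∈ e i` (cyclically). -/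
def HasBergeCycle {V : Type*} (H : Finset (Finset V)) (ℓ : ℕ) : Prop :=
  ∃ (v : Fin ℓ → V) (e : Fin ℓ → Finset V),
    Function.Injective v ∧ Function.Injective e ∧ (∀ i, e i ∈ H) ∧
    ∀ i : Fin ℓ, v i ∈ e i ∧ v ⟨(i.1 + 1) % ℓ, Nat.mod_lt _ i.pos⟩ ∈ e i

/-- `H` has a Berge Hamiltonian cycle: a Berge cycle whose representative vertices
are all the vertices. -/
def HasBergeHamCycle {V : Type*} [Fintype V] (H : Finset (Finset V)) : Prop :=
  ∃ (v : Fin (Fintype.card V) → V) (e : Fin (Fintype.card V) → Finset V),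
    Function.Bijective v ∧ Function.Injective e ∧ (∀ i, e i ∈ H) ∧
    ∀ i : Fin (Fintype.card V),
      v i ∈ e i ∧ v ⟨(i.1 + 1) % Fintype.card V, Nat.mod_lt _ i.pos⟩ ∈ e i

lemma count_insert_aux {k : ℕ} (s : Finset (Fin k)) (v : Fin k) (hv : v ∉ s) :
    ((s.powerset).image (insert v)).card = 2 ^ s.card := by
  rw [Finset.card_image_of_injOn, Finset.card_powerset]
  intro a ha b hb hab
  simp only [Finset.mem_coe, Finset.mem_powerset] at ha hb
  have hva : v ∉ a := fun h => hv (ha h)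
  have hvb : v ∉ b := fun h => hv (hb h)
  rw [← Finset.erase_insert hva, hab, Finset.erase_insert hvb]

lemma hamCycle_fin {n : ℕ} (H : Finset (Finset (Fin n))) (h : HasBergeHamCycle H) :
    ∃ (v : Fin n → Fin n) (e : Fin n → Finset (Fin n)),
    Function.Bijective v ∧ (∀ i, e i ∈ H) ∧
    ∀ i : Fin n, v i ∈ e i ∧ v ⟨(i.1 + 1) % n, Nat.mod_lt _ i.pos⟩ ∈ e i := by
  obtain ⟨v, e, hb, -, heH, hcyc⟩ := h
  have hC : Fintype.card (Fin n) = n := Fintype.card_fin n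
  refine ⟨v ∘ Fin.cast hC.symm, e ∘ Fin.cast hC.symm,
    hb.comp (finCongr hC.symm).bijective, fun i => heH _, fun i => ?_⟩
  obtain ⟨h1, h2⟩ := hcyc (Fin.cast hC.symm i)
  refine ⟨h1, ?_⟩
  have hkey : (Fin.cast hC.symm (⟨(i.1 + 1) % n, Nat.mod_lt _ i.pos⟩ : Fin n))
      = ⟨((Fin.cast hC.symm i).1 + 1) % Fintype.card (Fin n),
          Nat.mod_lt _ (Fin.cast hC.symm i).pos⟩ := by
    apply Fin.ext
    simp only [Fin.coe_cast]
    rw [hC]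
  show v (Fin.cast hC.symm ⟨(i.1 + 1) % n, Nat.mod_lt _ i.pos⟩) ∈ e (Fin.cast hC.symm i)
  rw [hkey]
  exact h2

lemma no_ham_aux (n m : ℕ) (hm : n = 2 * m + 1) (hm1 : 1 ≤ m) (hmltn : m < n)
    (v : Fin n → Fin n) (e : Fin n → Finset (Fin n))
    (hb : Function.Bijective v)
    (heH : ∀ i, e i ∈ (Finset.univ : Finset (Finset (Fin n))).filter
        (fun A : Finset (Fin n) => (∀ i ∈ A, (i : ℕ) ≤ m) ∨ (∀ i ∈ A, m ≤ (i : ℕ))))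
    (hcyc : ∀ i : Fin n, v i ∈ e i ∧ v ⟨(i.1 + 1) % n, Nat.mod_lt _ i.pos⟩ ∈ e i) :
    False := by
  obtain ⟨vinj, vsurj⟩ := hb
  have hNpos : 0 < n := by omega
  set w : ℕ → Fin n := fun k => v ⟨k % n, Nat.mod_lt _ hNpos⟩ with hw
  have pair : ∀ k : ℕ, ((w k : ℕ) ≤ m ∧ (w (k+1) : ℕ) ≤ m)
      ∨ (m ≤ (w k : ℕ) ∧ m ≤ (w (k+1) : ℕ)) := by
    intro k
    obtain ⟨h1, h2⟩ := hcyc ⟨k % n, Nat.mod_lt _ hNpos⟩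
    have hmod : (k % n + 1) % n = (k + 1) % n := by
      conv_rhs => rw [Nat.add_mod]
      rw [Nat.mod_eq_of_lt (show 1 < n by omega)]
    have hidx : (⟨(k % n + 1) % n, Nat.mod_lt _ hNpos⟩ : Fin n)
        = ⟨(k + 1) % n, Nat.mod_lt _ hNpos⟩ := Fin.ext hmod
    have h2' : v ⟨(k + 1) % n, Nat.mod_lt _ hNpos⟩ ∈ e ⟨k % n, Nat.mod_lt _ hNpos⟩ :=
      hidx ▸ h2
    have hmem := heH ⟨k % n, Nat.mod_lt _ hNpos⟩
    rw [Finset.mem_filter] at hmem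
    rcases hmem.2 with h | h
    · exact Or.inl ⟨h _ h1, h _ h2'⟩
    · exact Or.inr ⟨h _ h1, h _ h2'⟩
  obtain ⟨j, hj⟩ := vsurj ⟨m, hmltn⟩
  set j0 := j.1 with hj0def
  have hj0 : j0 < n := j.isLt
  have wj0 : w j0 = ⟨m, hmltn⟩ := by
    have h0 : w j0 = v j := congrArg v (Fin.ext (Nat.mod_eq_of_lt hj0))
    rw [h0, hj]
  have notmid : ∀ t, 1 ≤ t → t ≤ n - 1 → ((w (j0 + t)) : ℕ) ≠ m := by
    intro t h1 h2 heq
    have hwe : w (j0 + t) = w j0 := by rw [wj0]; exact Fin.ext heq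
    have hvv : (⟨(j0 + t) % n, Nat.mod_lt _ hNpos⟩ : Fin n)
        = ⟨j0 % n, Nat.mod_lt _ hNpos⟩ := vinj hwe
    have hmm : (j0 + t) % n = j0 % n := congrArg Fin.val hvv
    have hdvd : n ∣ (j0 + t) - j0 := (Nat.modEq_iff_dvd' (Nat.le_add_right _ _)).mp hmm.symm
    rw [Nat.add_sub_cancel_left] at hdvd
    have := Nat.le_of_dvd (by omega) hdvd
    omega
  have side : ∀ t, 1 ≤ t → t ≤ n - 1 →
      (((w (j0 + t)) : ℕ) < m ↔ ((w (j0 + 1)) : ℕ) < m) := by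
    intro t
    induction t with
    | zero => omega
    | succ t ih =>
      intro h1 h2
      rcases Nat.lt_or_ge 1 (t + 1) with h | h
      · have ht1 : 1 ≤ t := by omega
        have hiht := ih ht1 (by omega)
        have hpair := pair (j0 + t)
        have h1' := notmid t ht1 (by omega)
        have h2' := notmid (t + 1) (by omega) h2
        have e1 : j0 + (t + 1) = j0 + t + 1 := by omega
        rw [e1] at h2' ⊢
        rcases hpair with ⟨ha, hb⟩ | ⟨ha, hb⟩ <;> omega
      · have : t = 0 := by omega
        subst this
        exact Iff.rfl
  have shift : ∀ a : Fin n, a.1 ≠ j0 → ∃ t, 1 ≤ t ∧ t ≤ n - 1 ∧ w (j0 + t) = v a := by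
    intro a ha
    have haLt : a.1 < n := a.isLt
    by_cases hc : j0 < a.1
    · refine ⟨a.1 - j0, by omega, by omega, ?_⟩
      have heq : j0 + (a.1 - j0) = a.1 := by omega
      rw [heq]
      exact congrArg v (Fin.ext (Nat.mod_eq_of_lt haLt))
    · refine ⟨a.1 + n - j0, by omega, by omega, ?_⟩
      have heq : j0 + (a.1 + n - j0) = a.1 + n := by omega
      rw [heq]
      refine congrArg v (Fin.ext ?_)
      show (a.1 + n) % n = a.1
      rw [Nat.add_mod_right, Nat.mod_eq_of_lt haLt]
  obtain ⟨a, hav⟩ := vsurj ⟨0, by omega⟩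
  obtain ⟨b, hbv⟩ := vsurj ⟨n - 1, by omega⟩
  have hane : a.1 ≠ j0 := by
    intro h
    have : a = j := Fin.ext h
    rw [this, hj] at hav
    have := congrArg Fin.val hav
    simp only [Fin.val_mk] at this
    omega
  have hbne : b.1 ≠ j0 := by
    intro h
    have : b = j := Fin.ext h
    rw [this, hj] at hbv
    have := congrArg Fin.val hbv
    simp only [Fin.val_mk] at this
    omega
  obtain ⟨ta, hta1, hta2, hta3⟩ := shift a hane
  obtain ⟨tb, htb1, htb2, htb3⟩ := shift b hbne
  have sa := side ta hta1 hta2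
  have sb := side tb htb1 htb2
  rw [hta3, hav] at sa
  rw [htb3, hbv] at sb
  simp only [Fin.val_mk] at sa sb
  omega

/-- Sharpness example, odd `n`: the hypergraph on `Fin n` consisting of all subsets of the
first `(n+1)/2` vertices together with all subsets of the last `(n+1)/2` vertices (the
two halves sharing the middle vertex) has minimum degree `2^((n-1)/2)` and no Berge
Hamiltonian cycle. -/
theorem stmt_11 (n : ℕ) (hodd : Odd n) (hn : 3 ≤ n) :
    (∀ v : Fin n, 2 ^ ((n - 1) / 2) ≤
      hDegree ((Finset.univ : Finset (Finset (Fin n))).filter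
        (fun A : Finset (Fin n) => (∀ i ∈ A, (i : ℕ) ≤ (n - 1) / 2) ∨ (∀ i ∈ A, (n - 1) / 2 ≤ (i : ℕ)))) v) ∧
    (∃ v : Fin n, hDegree ((Finset.univ : Finset (Finset (Fin n))).filter
        (fun A : Finset (Fin n) => (∀ i ∈ A, (i : ℕ) ≤ (n - 1) / 2) ∨ (∀ i ∈ A, (n - 1) / 2 ≤ (i : ℕ)))) v
      = 2 ^ ((n - 1) / 2)) ∧
    ¬ HasBergeHamCycle ((Finset.univ : Finset (Finset (Fin n))).filter
        (fun A : Finset (Fin n) => (∀ i ∈ A, (i : ℕ) ≤ (n - 1) / 2) ∨ (∀ i ∈ A, (n - 1) / 2 ≤ (i : ℕ)))) := by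
  obtain ⟨m, hm⟩ := hodd
  have hmn : (n - 1) / 2 = m := by omega
  have hm1 : 1 ≤ m := by omega
  have hmltn : m < n := by omega
  rw [hmn]
  refine ⟨?_, ?_, ?_⟩
  · -- min degree
    intro v0
    rw [hDegree]
    by_cases hv : (v0 : ℕ) ≤ m
    · have hvL : v0 ∈ Finset.Iic (⟨m, hmltn⟩ : Fin n) := by
        rw [Finset.mem_Iic, Fin.le_def]; exact hv
      calc 2 ^ m
          = (((((Finset.Iic (⟨m, hmltn⟩ : Fin n)).erase v0)).powerset).image (insert v0)).card := by
            rw [count_insert_aux _ _ (Finset.notMem_erase _ _),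
              Finset.card_erase_of_mem hvL, Fin.card_Iic]
            simp only [Fin.val_mk, Nat.add_sub_cancel]
        _ ≤ _ := by
            apply Finset.card_le_card
            intro A hA
            simp only [Finset.mem_image, Finset.mem_powerset] at hA
            obtain ⟨a, haL, rfl⟩ := hA
            rw [Finset.mem_filter, Finset.mem_filter]
            refine ⟨⟨Finset.mem_univ _, Or.inl ?_⟩, Finset.mem_insert_self _ _⟩
            intro i hi
            rcases Finset.mem_insert.mp hi with rfl | hia
            · exact hv
            · have h1 := Finset.mem_of_mem_erase (haL hia)
              rw [Finset.mem_Iic, Fin.le_def] at h1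
              exact h1
    · have hv' : m ≤ (v0 : ℕ) := le_of_not_ge hv
      have hvL : v0 ∈ Finset.Ici (⟨m, hmltn⟩ : Fin n) := by
        rw [Finset.mem_Ici, Fin.le_def]; exact hv'
      calc 2 ^ m
          = (((((Finset.Ici (⟨m, hmltn⟩ : Fin n)).erase v0)).powerset).image (insert v0)).card := by
            rw [count_insert_aux _ _ (Finset.notMem_erase _ _),
              Finset.card_erase_of_mem hvL, Fin.card_Ici]
            congr 1
            simp only [Fin.val_mk]
            omega
        _ ≤ _ := by
            apply Finset.card_le_card
            intro A hA
            simp only [Finset.mem_image, Finset.mem_powerset] at hA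
            obtain ⟨a, haL, rfl⟩ := hA
            rw [Finset.mem_filter, Finset.mem_filter]
            refine ⟨⟨Finset.mem_univ _, Or.inr ?_⟩, Finset.mem_insert_self _ _⟩
            intro i hi
            rcases Finset.mem_insert.mp hi with rfl | hia
            · exact hv'
            · have h1 := Finset.mem_of_mem_erase (haL hia)
              rw [Finset.mem_Ici, Fin.le_def] at h1
              exact h1
  · -- exact degree at vertex 0
    refine ⟨⟨0, by omega⟩, ?_⟩
    rw [hDegree]
    have hset : (((Finset.univ : Finset (Finset (Fin n))).filter
        (fun A : Finset (Fin n) => (∀ i ∈ A, (i : ℕ) ≤ m) ∨ (∀ i ∈ A, m ≤ (i : ℕ)))).filter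
          (fun e => (⟨0, by omega⟩ : Fin n) ∈ e))
        = (((Finset.Iic (⟨m, hmltn⟩ : Fin n)).erase ⟨0, by omega⟩).powerset).image
            (insert (⟨0, by omega⟩ : Fin n)) := by
      ext A
      simp only [Finset.mem_filter, Finset.mem_univ, true_and, Finset.mem_image,
        Finset.mem_powerset]
      constructor
      · rintro ⟨hcond, h0A⟩
        have hlow : ∀ i ∈ A, (i : ℕ) ≤ m := by
          rcases hcond with h | h
          · exact h
          · have := h _ h0A
            simp only [Fin.val_mk] at this
            omega
        refine ⟨A.erase ⟨0, by omega⟩, ?_, Finset.insert_erase h0A⟩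
        apply Finset.erase_subset_erase
        intro i hi
        rw [Finset.mem_Iic, Fin.le_def]
        exact hlow i hi
      · rintro ⟨a, haL, rfl⟩
        refine ⟨Or.inl ?_, Finset.mem_insert_self _ _⟩
        intro i hi
        rcases Finset.mem_insert.mp hi with rfl | hia
        · simp only [Fin.val_mk]
          omega
        · have h1 := Finset.mem_of_mem_erase (haL hia)
          rw [Finset.mem_Iic, Fin.le_def] at h1
          exact h1
    rw [hset, count_insert_aux _ _ (Finset.notMem_erase _ _),
      Finset.card_erase_of_mem (by rw [Finset.mem_Iic, Fin.le_def]; simp only [Fin.val_mk]; omega),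
      Fin.card_Iic]
    simp only [Fin.val_mk, Nat.add_sub_cancel]
  · -- no Berge Hamiltonian cycle
    intro hham
    obtain ⟨v, e, hb, heH, hcyc⟩ := hamCycle_fin _ hham
    exact no_ham_aux n m hm hm1 hmltn v e hb heH hcyc
end

section
/- For odd n, the n-vertex hypergraph whose hyperedges are all subsets of [n] containing at most one vertex from {1,...,(n+1)/2} has minimum degree 2^((n-1)/2) and contains no Berge Hamiltonian cycle. -/
/-!
A vertex `v` of the small side `P` lies exactly in the edges `insert v B` with `B` disjoint
from `P`, so its degree is `2 ^ (n - |P|)`. A vertex `v` outside `P` lies in at least as many: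
the edges `insert v B` with `B` avoiding `v` and meeting `P` only in one fixed vertex. In a Berge Hamiltonian cycle, more than
half of the cyclic positions carry a vertex of `P`, so two consecutive ones do, and the edge
joining them meets `P` twice.
-/

open Finset

lemma finRotate_eq_mk_mod {N : ℕ} (i : Fin N) :
    finRotate N i = ⟨(i.1 + 1) % N, Nat.mod_lt _ i.pos⟩ := by
  have := i.neZero
  rw [finRotate_apply]
  ext
  simp [Fin.val_add, Nat.add_mod]

lemma finRotate_apply_ne {N : ℕ} (hN : 2 ≤ N) (i : Fin N) : finRotate N i ≠ i := by
  have := i.neZero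
  simp only [finRotate_apply, ne_eq, add_eq_left, Fin.one_eq_zero_iff]
  omega

section Degree

variable {V : Type*} [DecidableEq V] {H : Finset (Finset V)} {v : V} {U : Finset V}

lemma pow_card_le_hDegree (hv : v ∉ U) (hU : ∀ B ⊆ U, insert v B ∈ H) :
    2 ^ #U ≤ hDegree H v := by
  rw [← card_powerset, hDegree]
  refine card_le_card_of_injOn (insert v) (fun B hB => ?_) (fun B hB C hC hBC => ?_)
  · exact mem_filter.2 ⟨hU B (mem_powerset.1 hB), mem_insert_self v B⟩
  · have hvB : v ∉ B := fun h => hv (mem_powerset.1 hB h)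
    have hvC : v ∉ C := fun h => hv (mem_powerset.1 hC h)
    rw [← erase_insert hvB, ← erase_insert hvC]
    exact congrArg (·.erase v) hBC

lemma hDegree_le_pow_card (hU : ∀ A ∈ H, v ∈ A → A.erase v ⊆ U) :
    hDegree H v ≤ 2 ^ #U := by
  rw [← card_powerset, hDegree]
  refine card_le_card_of_injOn (·.erase v) (fun A hA => ?_) (fun A hA B hB hAB => ?_)
  · obtain ⟨hAH, hvA⟩ := mem_filter.1 hA
    exact mem_powerset.2 (hU A hAH hvA)
  · rw [← insert_erase (mem_filter.1 hA).2, ← insert_erase (mem_filter.1 hB).2]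
    exact congrArg (insert v) hAB

end Degree

section AtMostOneIn

variable {V : Type*} [Fintype V] [DecidableEq V] (p : V → Prop) [DecidablePred p]

def atMostOneIn : Finset (Finset V) :=
  univ.filter fun A => #(A.filter p) ≤ 1

variable {p}

lemma mem_atMostOneIn {A : Finset V} :
    A ∈ atMostOneIn p ↔ ∀ x ∈ A, ∀ y ∈ A, p x → p y → x = y := by
  simp only [atMostOneIn, mem_filter, mem_univ, true_and, card_le_one]
  grind

lemma mem_atMostOneIn_of_forall_eq {A : Finset V} {w : V} (h : ∀ z ∈ A, p z → z = w) :
    A ∈ atMostOneIn p :=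
  mem_atMostOneIn.2 fun x hx y hy hpx hpy => (h x hx hpx).trans (h y hy hpy).symm

lemma hDegree_atMostOneIn_of_pos {v : V} (hv : p v) :
    hDegree (atMostOneIn p) v = 2 ^ #(univ.filter fun x => ¬ p x) := by
  refine le_antisymm (hDegree_le_pow_card fun A hA hvA x hx => ?_)
    (pow_card_le_hDegree (by simpa using hv) fun B hB => ?_)
  · obtain ⟨hxv, hxA⟩ := mem_erase.1 hx
    exact mem_filter.2 ⟨mem_univ x, fun hpx => hxv (mem_atMostOneIn.1 hA x hxA v hvA hpx hv)⟩
  · refine mem_atMostOneIn_of_forall_eq (w := v) fun z hz hpz => ?_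
    rcases mem_insert.1 hz with rfl | hzB
    · rfl
    · exact absurd hpz (mem_filter.1 (hB hzB)).2

lemma pow_le_hDegree_atMostOneIn {w : V} (hw : p w) (v : V) :
    2 ^ #(univ.filter fun x => ¬ p x) ≤ hDegree (atMostOneIn p) v := by
  by_cases hv : p v
  · exact (hDegree_atMostOneIn_of_pos hv).ge
  set T := univ.filter fun x => ¬ p x
  have hvT : v ∈ T := by simpa [T] using hv
  have hwT : w ∉ T := by simpa [T] using hw
  have hvw : v ≠ w := fun h => hv (h ▸ hw)
  have hcard : #(insert w (T.erase v)) = #T := by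
    rw [card_insert_of_notMem (fun h => hwT (mem_of_mem_erase h)), card_erase_add_one hvT]
  rw [← hcard]
  refine pow_card_le_hDegree (by simp [hvw]) fun B hB =>
    mem_atMostOneIn_of_forall_eq (w := w) fun z hz hpz => ?_
  rcases mem_insert.1 hz with rfl | hzB
  · exact absurd hpz hv
  rcases mem_insert.1 (hB hzB) with rfl | hzT
  · rfl
  · exact absurd hpz (mem_filter.1 (mem_of_mem_erase hzT)).2

theorem not_hasBergeHamCycle_atMostOneIn (hV : 2 ≤ Fintype.card V)
    (hp : Fintype.card V < 2 * #(univ.filter p)) : ¬ HasBergeHamCycle (atMostOneIn p) := by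
  rintro ⟨v, e, hv, -, he, hve⟩
  set σ := Equiv.ofBijective v hv
  set P := (univ.filter p).map σ.symm.toEmbedding
  obtain ⟨i, hi⟩ : (P ∩ P.map (finRotate _).symm.toEmbedding).Nonempty := by
    refine inter_nonempty_of_card_lt_card_add_card (subset_univ _) (subset_univ _) ?_
    simpa [P, two_mul] using hp
  obtain ⟨hiP, hiQ⟩ := mem_inter.1 hi
  simp only [P, mem_map_equiv, Equiv.symm_symm, mem_filter, mem_univ, true_and] at hiP hiQ
  obtain ⟨hvi, hvi'⟩ := hve i
  rw [← finRotate_eq_mk_mod] at hvi'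
  exact finRotate_apply_ne hV i (hv.1 (mem_atMostOneIn.1 (he i) _ hvi' _ hvi hiQ hiP))

end AtMostOneIn

/-- Sharpness example, odd `n`: the hypergraph on `Fin n` whose hyperedges are all sets
containing at most one vertex from the first `(n+1)/2` vertices has minimum degree
`2^((n-1)/2)` and no Berge Hamiltonian cycle. -/
theorem stmt_12 (n : ℕ) (hodd : Odd n) (hn : 3 ≤ n) :
    (∀ v : Fin n, 2 ^ ((n - 1) / 2) ≤
      hDegree ((Finset.univ : Finset (Finset (Fin n))).filter
        (fun A : Finset (Fin n) => (A.filter (fun i : Fin n => (i : ℕ) < (n + 1) / 2)).card ≤ 1)) v) ∧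
    (∃ v : Fin n, hDegree ((Finset.univ : Finset (Finset (Fin n))).filter
        (fun A : Finset (Fin n) => (A.filter (fun i : Fin n => (i : ℕ) < (n + 1) / 2)).card ≤ 1)) v
      = 2 ^ ((n - 1) / 2)) ∧
    ¬ HasBergeHamCycle ((Finset.univ : Finset (Finset (Fin n))).filter
        (fun A : Finset (Fin n) => (A.filter (fun i : Fin n => (i : ℕ) < (n + 1) / 2)).card ≤ 1)) := by
  have hcard : #(univ.filter fun x : Fin n => ¬ (x : ℕ) < (n + 1) / 2) = (n - 1) / 2 := by
    rw [filter_not, card_sdiff_of_subset (filter_subset _ _), Fin.card_filter_val_lt, card_univ,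
      Fintype.card_fin]
    obtain ⟨k, rfl⟩ := hodd
    omega
  have hv₀ : (0 : ℕ) < (n + 1) / 2 := by omega
  rw [← hcard]
  refine ⟨pow_le_hDegree_atMostOneIn (w := ⟨0, by omega⟩) hv₀,
    ⟨⟨0, by omega⟩, hDegree_atMostOneIn_of_pos hv₀⟩,
    not_hasBergeHamCycle_atMostOneIn (by rw [Fintype.card_fin]; omega) ?_⟩
  rw [Fin.card_filter_val_lt, Fintype.card_fin]
  obtain ⟨k, rfl⟩ := hodd
  omega
end

section
/- Let k ≥ 2 and let H be a hypergraph with minimum degree δ(H) ≥ 2^(k−2) + 1. Then H contains a Berge path with k base vertices (i.e., of length k−1). -/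
/-!
Grow a Berge path one vertex at a time. Let `P = v 0, e 0, …, e (n-1), v n` have vertex set `S`
and assume `deg (v n) > 2 ^ n`. If some edge through `v n` outside `P` leaves `S`, extend along it.
Otherwise every edge through `v n` is an edge of `P` or a subset of `S`; only `2 ^ n` subsets of
`S` contain `v n`, so some edge `e i` of `P` through `v n` leaves `S`, at a vertex `x`. Counting
again (`n` edges of `P`, `2 ^ (n - 1)` subsets of `S` through `v n` avoiding `v i`), some edge `g`
outside `P` contains both `v i` and `v n`. The Pósa rotation `v 0, …, v i, v n, …, v (i + 1)`
uses `g` instead of `e i` and ends at `v (i + 1) ∈ e i`, so `e i` extends it to `x`.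
-/

section

open Finset

variable {V : Type*}

theorem hDegree_le_card_add_two_pow [DecidableEq V] {H E : Finset (Finset V)} {T : Finset V}
    {u : V} (h : ∀ f ∈ H, u ∈ f → f ∈ E ∨ f ⊆ T) : hDegree H u ≤ #E + 2 ^ #(T.erase u) :=
  calc hDegree H u ≤ #(E ∪ (T.erase u).powerset.image (insert u)) := by
        refine card_le_card fun f hf => ?_
        obtain ⟨hfH, huf⟩ := mem_filter.1 hf
        refine mem_union.2 ((h f hfH huf).imp id fun hfT => mem_image.2 ⟨f.erase u, ?_, ?_⟩)
        · exact mem_powerset.2 (erase_subset_erase u hfT)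
        · exact insert_erase huf
    _ ≤ #E + #((T.erase u).powerset.image (insert u)) := card_union_le _ _
    _ ≤ #E + 2 ^ #(T.erase u) := by grw [card_image_le, card_powerset]

/-- `(v, e)` is a Berge path of length `n` in `H`; only `v 0, …, v n` and `e 0, …, e (n - 1)`
matter. -/
structure IsBergePath (H : Finset (Finset V)) (n : ℕ) (v : ℕ → V) (e : ℕ → Finset V) :
    Prop where
  injOn_vert : Set.InjOn v (Set.Iic n)
  injOn_edge : Set.InjOn e (Set.Iio n)
  edge_mem : ∀ j < n, e j ∈ H
  mem_edge : ∀ j < n, v j ∈ e j ∧ v (j + 1) ∈ e j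

namespace IsBergePath

def vertFinset [DecidableEq V] (n : ℕ) (v : ℕ → V) : Finset V := (range (n + 1)).image v

def edgeFinset [DecidableEq V] (n : ℕ) (e : ℕ → Finset V) : Finset (Finset V) := (range n).image e

@[simp]
theorem mem_vertFinset [DecidableEq V] {n : ℕ} {v : ℕ → V} {x : V} :
    x ∈ vertFinset n v ↔ ∃ j ≤ n, v j = x := by
  simp [vertFinset]

@[simp]
theorem mem_edgeFinset [DecidableEq V] {n : ℕ} {e : ℕ → Finset V} {f : Finset V} :
    f ∈ edgeFinset n e ↔ ∃ j < n, e j = f := by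
  simp [edgeFinset]

theorem card_vertFinset_le [DecidableEq V] (n : ℕ) (v : ℕ → V) : #(vertFinset n v) ≤ n + 1 :=
  card_image_le.trans (card_range _).le

theorem card_edgeFinset_le [DecidableEq V] (n : ℕ) (e : ℕ → Finset V) : #(edgeFinset n e) ≤ n :=
  card_image_le.trans (card_range _).le

variable {H : Finset (Finset V)} {n : ℕ} {v : ℕ → V} {e : ℕ → Finset V}

theorem zero (H : Finset (Finset V)) (a : V) (e : ℕ → Finset V) :
    IsBergePath H 0 (fun _ => a) e where
  injOn_vert j hj l hl _ := by simp_all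
  injOn_edge j hj := by simp at hj
  edge_mem j hj := by omega
  mem_edge j hj := by omega

theorem snoc [DecidableEq V] (hp : IsBergePath H n v e) {f : Finset V} {x : V} (hf : f ∈ H)
    (hfe : f ∉ edgeFinset n e) (hvf : v n ∈ f) (hxf : x ∈ f) (hxv : x ∉ vertFinset n v) :
    IsBergePath H (n + 1) (Function.update v (n + 1) x) (Function.update e n f) where
  injOn_vert j hj l hl hjl := by
    simp only [Set.mem_Iic] at hj hl
    simp only [Function.update_apply] at hjl
    split_ifs at hjl with h₁ h₂ h₂
    · omega
    · exact absurd ⟨l, by omega, hjl.symm⟩ (mem_vertFinset.not.1 hxv)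
    · exact absurd ⟨j, by omega, hjl⟩ (mem_vertFinset.not.1 hxv)
    · exact hp.injOn_vert (by simp; omega) (by simp; omega) hjl
  injOn_edge j hj l hl hjl := by
    simp only [Set.mem_Iio] at hj hl
    simp only [Function.update_apply] at hjl
    split_ifs at hjl with h₁ h₂ h₂
    · omega
    · exact absurd ⟨l, by omega, hjl.symm⟩ (mem_edgeFinset.not.1 hfe)
    · exact absurd ⟨j, by omega, hjl⟩ (mem_edgeFinset.not.1 hfe)
    · exact hp.injOn_edge (by simp; omega) (by simp; omega) hjl
  edge_mem j hj := by
    rcases Nat.lt_succ_iff_lt_or_eq.1 hj with hj | rfl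
    · simpa [Function.update_apply, hj.ne] using hp.edge_mem j hj
    · simpa using hf
  mem_edge j hj := by
    rcases Nat.lt_succ_iff_lt_or_eq.1 hj with hj | rfl
    · have hjn : j ≠ n + 1 := by omega
      simpa [Function.update_apply, hj.ne, hjn] using hp.mem_edge j hj
    · simpa using ⟨hvf, hxf⟩

/-- Pósa rotation: with `g` joining `v i` to the endpoint `v n`, the path
`v 0, …, v i, v n, …, v (i + 1)`. -/
theorem rotate [DecidableEq V] (hp : IsBergePath H n v e) {i : ℕ} (hi : i < n) {g : Finset V}
    (hg : g ∈ H) (hge : g ∉ edgeFinset n e) (hvg : v i ∈ g) (hug : v n ∈ g) :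
    IsBergePath H n (fun j => v (if j ≤ i then j else n + i + 1 - j))
      (fun j => Function.update e i g (if j ≤ i then j else n + i - j)) where
  injOn_vert j hj l hl hjl := by
    simp only [Set.mem_Iic] at hj hl
    have := hp.injOn_vert (by simp; split_ifs <;> omega) (by simp; split_ifs <;> omega) hjl
    split_ifs at this <;> omega
  injOn_edge j hj l hl hjl := by
    simp only [Set.mem_Iio] at hj hl
    simp only [Function.update_apply] at hjl
    have hge' : ∀ j < n, e j ≠ g := by simpa using hge
    split_ifs at hjl <;> first
      | omega
      | exact absurd hjl (hge' _ (by omega))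
      | exact absurd hjl.symm (hge' _ (by omega))
      | have := hp.injOn_edge (by simp; omega) (by simp; omega) hjl; omega
  edge_mem j hj := by
    simp only [Function.update_apply]
    split_ifs <;> first | exact hg | exact hp.edge_mem _ (by omega)
  mem_edge j hj := by
    rcases lt_trichotomy j i with hji | rfl | hij
    · simpa [Function.update_apply, hji.le, hji.ne, Nat.succ_le_of_lt hji] using hp.mem_edge j hj
    · simpa [hug] using hvg
    · have hidx : n + i - j ≠ i := by omega
      have h := hp.mem_edge (n + i - j) (by omega)
      rw [show n + i - j + 1 = n + i + 1 - j by omega] at h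
      simpa [Function.update_apply, hidx, hij.not_ge, lt_asymm hij,
        show n + i + 1 - (j + 1) = n + i - j by omega] using h.symm

theorem exists_succ_of_rotate [DecidableEq V] (hp : IsBergePath H n v e) {i : ℕ} (hi : i < n)
    {g : Finset V} (hg : g ∈ H) (hge : g ∉ edgeFinset n e) (hvg : v i ∈ g) (hug : v n ∈ g)
    {x : V} (hxe : x ∈ e i) (hxv : x ∉ vertFinset n v) :
    ∃ v' e', IsBergePath H (n + 1) v' e' := by
  refine ⟨_, _, (hp.rotate hi hg hge hvg hug).snoc (hp.edge_mem i hi) ?_ ?_ hxe ?_⟩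
  · simp only [mem_edgeFinset, not_exists, not_and]
    intro j hj
    obtain ⟨t, ht, hτ⟩ : ∃ t < n, (if j ≤ i then j else n + i - j) = t :=
      ⟨_, by split_ifs <;> omega, rfl⟩
    simp only [hτ, Function.update_apply]
    split_ifs with hti
    · exact fun h => hge (h ▸ mem_edgeFinset.2 ⟨i, hi, rfl⟩)
    · exact fun h => hti (hp.injOn_edge (by simpa) (by simpa) h)
  · simpa [hi.not_ge, show n + i + 1 - n = i + 1 by omega] using (hp.mem_edge i hi).2
  · simp only [mem_vertFinset, not_exists, not_and]
    exact fun j _ h => hxv (mem_vertFinset.2 ⟨_, by split_ifs <;> omega, h⟩)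

theorem exists_edge_not_subset [DecidableEq V]
    (hstuck : ∀ f ∈ H, v n ∈ f → f ∉ edgeFinset n e → f ⊆ vertFinset n v)
    (hdeg : 2 ^ n < hDegree H (v n)) : ∃ i < n, v n ∈ e i ∧ ¬ e i ⊆ vertFinset n v := by
  by_contra! hin
  have hdeg_le := hDegree_le_card_add_two_pow (E := ∅) fun f hf hvf => by
    by_cases hfe : f ∈ edgeFinset n e
    · obtain ⟨j, hj, rfl⟩ := mem_edgeFinset.1 hfe
      exact Or.inr (hin j hj hvf)
    · exact Or.inr (hstuck f hf hvf hfe)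
  have hpow : 2 ^ #((vertFinset n v).erase (v n)) ≤ 2 ^ n := by
    refine Nat.pow_le_pow_right two_pos ?_
    rw [card_erase_of_mem (mem_vertFinset.2 ⟨n, le_rfl, rfl⟩)]
    have := card_vertFinset_le n v
    omega
  simp only [card_empty, zero_add] at hdeg_le
  omega

theorem exists_chord [DecidableEq V] (hp : IsBergePath H n v e)
    (hstuck : ∀ f ∈ H, v n ∈ f → f ∉ edgeFinset n e → f ⊆ vertFinset n v)
    (hdeg : 2 ^ n < hDegree H (v n)) {i : ℕ} (hi : i < n) :
    ∃ g ∈ H, g ∉ edgeFinset n e ∧ v i ∈ g ∧ v n ∈ g := by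
  by_contra! hno
  have hdeg_le := hDegree_le_card_add_two_pow (T := (vertFinset n v).erase (v i))
    fun f hf hvf => by
      by_cases hfe : f ∈ edgeFinset n e
      · exact Or.inl hfe
      · exact Or.inr fun x hx => mem_erase.2
          ⟨fun h => hno f hf hfe (h ▸ hx) hvf, hstuck f hf hvf hfe hx⟩
  have hvi : v i ≠ v n := fun h => hi.ne (hp.injOn_vert (by simp; omega) (by simp) h)
  have hcard : #(((vertFinset n v).erase (v i)).erase (v n)) ≤ n - 1 := by
    rw [card_erase_of_mem (mem_erase.2 ⟨hvi.symm, mem_vertFinset.2 ⟨n, le_rfl, rfl⟩⟩),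
      card_erase_of_mem (mem_vertFinset.2 ⟨i, hi.le, rfl⟩)]
    have := card_vertFinset_le n v
    omega
  have hpow : n + 2 ^ (n - 1) ≤ 2 ^ n := by
    have := Nat.lt_two_pow_self (n := n - 1)
    have : 2 ^ n = 2 ^ (n - 1) * 2 := by rw [← pow_succ, Nat.sub_add_cancel (by omega)]
    omega
  have := Nat.pow_le_pow_right two_pos hcard
  have := card_edgeFinset_le n e
  omega

theorem exists_succ [DecidableEq V] (hp : IsBergePath H n v e) (hdeg : 2 ^ n < hDegree H (v n)) :
    ∃ v' e', IsBergePath H (n + 1) v' e' := by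
  by_cases hext : ∃ f ∈ H, v n ∈ f ∧ f ∉ edgeFinset n e ∧ ¬ f ⊆ vertFinset n v
  · obtain ⟨f, hf, hvf, hfe, hfv⟩ := hext
    obtain ⟨x, hxf, hxv⟩ := not_subset.1 hfv
    exact ⟨_, _, hp.snoc hf hfe hvf hxf hxv⟩
  push Not at hext
  obtain ⟨i, hi, hvi, hiv⟩ := exists_edge_not_subset hext hdeg
  obtain ⟨x, hxe, hxv⟩ := not_subset.1 hiv
  obtain ⟨g, hg, hge, hvg, hug⟩ := hp.exists_chord hext hdeg hi
  exact hp.exists_succ_of_rotate hi hg hge hvg hug hxe hxv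

end IsBergePath

theorem exists_isBergePath_of_two_pow_lt_hDegree [DecidableEq V] [Nonempty V]
    {H : Finset (Finset V)} {n : ℕ} (hδ : ∀ u, 2 ^ n < hDegree H u) :
    ∃ v e, IsBergePath H (n + 1) v e := by
  suffices ∀ m ≤ n + 1, ∃ v e, IsBergePath H m v e from this _ le_rfl
  intro m hm
  induction m with
  | zero => exact ⟨_, _, .zero H (Classical.arbitrary V) fun _ => ∅⟩
  | succ m ih =>
    obtain ⟨v, e, hp⟩ := ih (by omega)
    exact hp.exists_succ ((Nat.pow_le_pow_right two_pos (by omega)).trans_lt (hδ _))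

end

/-- Dirac-type condition for long Berge paths: if `k ≥ 2` and `H` is a simple hypergraph
with minimum degree at least `2^(k-2) + 1`, then `H` contains a Berge path with `k` base
vertices (i.e. of length `k - 1`). -/
theorem stmt_13 {V : Type*} [DecidableEq V] [Nonempty V] (k : ℕ) (hk : 2 ≤ k)
    (H : Finset (Finset V))
    (hδ : ∀ v : V, 2 ^ (k - 2) + 1 ≤ hDegree H v) :
    ∃ (v : Fin k → V) (e : Fin (k - 1) → Finset V),
      Function.Injective v ∧ Function.Injective e ∧ (∀ i, e i ∈ H) ∧
      ∀ i : Fin (k - 1),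
        v ⟨i.1, by have := i.2; omega⟩ ∈ e i ∧ v ⟨i.1 + 1, by have := i.2; omega⟩ ∈ e i := by
  obtain ⟨v, e, hp⟩ := exists_isBergePath_of_two_pow_lt_hDegree hδ
  rw [show k - 2 + 1 = k - 1 by omega] at hp
  refine ⟨fun i => v i, fun i => e i, fun a b h => ?_, fun a b h => ?_,
    fun i => hp.edge_mem i i.2, fun i => hp.mem_edge i i.2⟩
  · exact Fin.ext (hp.injOn_vert (by simp; omega) (by simp; omega) h)
  · exact Fin.ext (hp.injOn_edge (by simp) (by simp) h)
end

section
/- Let k ≥ 3 and let H be a hypergraph with minimum degree δ(H) ≥ 2^(k−2) + 2. Then H contains a Berge cycle of length at least k. -/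
/-!
Take a longest Berge path `v 0, e 0, …, e (N-1), v N` and suppose there is no Berge cycle of
length at least `k`. An edge through `v N` off the path has all its vertices on the path (by
maximality), indeed among the last `k - 1` of them (else it closes a long cycle); a path edge
`e t` through `v N` has `N + 1 - k ≤ t` for the same reason. Counting subsets of those `k - 1`
vertices shows that for every `t ≥ N + 2 - k` some off-path edge `f` contains `v t` and `v N`.
The Pósa rotation along `f` gives another longest path, ending at `v (t + 1)`, which does not
use `e t`; so `e t` also lies among the last `k - 1` vertices. Hence every edge through `v N`
except possibly `e (N + 1 - k)` is a subset of a `(k - 1)`-set containing `v N`, and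
`deg (v N) ≤ 2 ^ (k - 2) + 1`.
-/

theorem Finset.card_filter_mem_powerset_le {α : Type*} [DecidableEq α] (M : Finset α) (a : α) :
    (M.powerset.filter (a ∈ ·)).card ≤ 2 ^ (M.card - 1) := by
  by_cases ha : a ∈ M
  · have hsub : M.powerset.filter (a ∈ ·) ⊆ (M.erase a).powerset.image (insert a) := by
      intro S hS
      rw [Finset.mem_filter, Finset.mem_powerset] at hS
      exact Finset.mem_image.2 ⟨S.erase a, Finset.mem_powerset.2 (Finset.erase_subset_erase a hS.1),
        Finset.insert_erase hS.2⟩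
    calc _ ≤ _ := Finset.card_le_card hsub
      _ ≤ _ := Finset.card_image_le
      _ = 2 ^ (M.card - 1) := by rw [Finset.card_powerset, Finset.card_erase_of_mem ha]
  · simp [Finset.filter_false_of_mem fun S hS h => ha (Finset.mem_powerset.1 hS h)]

theorem sub_one_add_two_pow_sub_three_lt (k : ℕ) : k - 1 + 2 ^ (k - 3) < 2 ^ (k - 2) + 2 := by
  rcases lt_or_ge k 3 with hk | hk
  · interval_cases k <;> norm_num
  · obtain ⟨m, rfl⟩ := Nat.exists_eq_add_of_le hk
    have := Nat.lt_two_pow_self (n := m)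
    simp only [show 3 + m - 3 = m by omega, show 3 + m - 2 = m + 1 by omega, pow_succ]
    omega

-- A Berge path with edges `e 0, …, e (n - 1)` and vertices `v 0, …, v n`; the values of `v` and
-- `e` at larger indices play no role.
structure IsBergePath_s14 {V : Type*} (H : Finset (Finset V)) (n : ℕ) (v : ℕ → V)
    (e : ℕ → Finset V) : Prop where
  injOn_vertex : Set.InjOn v (Set.Iic n)
  injOn_edge : Set.InjOn e (Set.Iio n)
  edge_mem : ∀ i < n, e i ∈ H
  mem_edge : ∀ i < n, v i ∈ e i ∧ v (i + 1) ∈ e i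

namespace IsBergePath_s14

variable {V : Type*} {H : Finset (Finset V)} {n : ℕ} {v : ℕ → V} {e : ℕ → Finset V}

theorem length_le_card (hP : IsBergePath_s14 H n v e) : n ≤ H.card := by
  simpa using Finset.card_le_card_of_injOn (s := Finset.range n) e
    (fun i hi => hP.edge_mem i (by simpa using hi)) (by simpa [Set.InjOn] using hP.injOn_edge)

theorem drop (hP : IsBergePath_s14 H n v e) {a : ℕ} (ha : a ≤ n) :
    IsBergePath_s14 H (n - a) (fun i => v (a + i)) (fun i => e (a + i)) where
  injOn_vertex i hi j hj hij := by
    simp only [Set.mem_Iic] at hi hj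
    have := hP.injOn_vertex (by simp; omega : a + i ∈ Set.Iic n) (by simp; omega) hij
    omega
  injOn_edge i hi j hj hij := by
    simp only [Set.mem_Iio] at hi hj
    have := hP.injOn_edge (by simp; omega : a + i ∈ Set.Iio n) (by simp; omega) hij
    omega
  edge_mem i hi := hP.edge_mem _ (by omega)
  mem_edge i hi := by simpa [add_assoc] using hP.mem_edge (a + i) (by omega)

theorem snoc_s14 [DecidableEq V] (hP : IsBergePath_s14 H n v e) {h : Finset V} {x : V} (hh : h ∈ H)
    (hun : ∀ j < n, h ≠ e j) (hvn : v n ∈ h) (hx : x ∈ h) (hxv : ∀ i ≤ n, v i ≠ x) :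
    IsBergePath_s14 H (n + 1) (Function.update v (n + 1) x) (Function.update e n h) where
  injOn_vertex i hi j hj hij := by
    simp only [Set.mem_Iic] at hi hj
    simp only [Function.update_apply] at hij
    split_ifs at hij with h₁ h₂ h₂
    · omega
    · exact absurd hij.symm (hxv j (by omega))
    · exact absurd hij (hxv i (by omega))
    · exact hP.injOn_vertex (by simp; omega) (by simp; omega) hij
  injOn_edge i hi j hj hij := by
    simp only [Set.mem_Iio] at hi hj
    simp only [Function.update_apply] at hij
    split_ifs at hij with h₁ h₂ h₂
    · omega
    · exact absurd hij (hun j (by omega))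
    · exact absurd hij.symm (hun i (by omega))
    · exact hP.injOn_edge (by simp; omega) (by simp; omega) hij
  edge_mem i hi := by
    rcases Nat.lt_succ_iff_lt_or_eq.1 hi with hi | rfl
    · simpa [Function.update_apply, hi.ne] using hP.edge_mem i hi
    · simpa using hh
  mem_edge i hi := by
    rcases Nat.lt_succ_iff_lt_or_eq.1 hi with hi | rfl
    · have : i ≠ n + 1 := by omega
      simpa [Function.update_apply, hi.ne, this] using hP.mem_edge i hi
    · simpa using ⟨hvn, hx⟩

theorem hasBergeCycle_of_closing_edge (hP : IsBergePath_s14 H n v e) {h : Finset V} (hh : h ∈ H)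
    (hun : ∀ j < n, h ≠ e j) (hv₀ : v 0 ∈ h) (hvn : v n ∈ h) : HasBergeCycle H (n + 1) := by
  refine ⟨fun i => v i, fun i => if (i : ℕ) < n then e i else h, ?_, ?_, ?_, ?_⟩
  · intro i j hij
    exact Fin.ext (hP.injOn_vertex (by simp; omega) (by simp; omega) hij)
  · intro i j hij
    dsimp only at hij
    split_ifs at hij with h₁ h₂ h₂
    · exact Fin.ext (hP.injOn_edge h₁ h₂ hij)
    · exact absurd hij.symm (hun i h₁)
    · exact absurd hij (hun j h₂)
    · ext; omega
  · intro i
    simp only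
    split_ifs with h₁
    exacts [hP.edge_mem i h₁, hh]
  · intro i
    simp only
    split_ifs with h₁
    · rw [Nat.mod_eq_of_lt (by omega)]
      exact hP.mem_edge i h₁
    · rw [show (i : ℕ) = n by omega, Nat.mod_self]
      exact ⟨hvn, hv₀⟩

theorem hasBergeCycle_of_closing_edge_of_le (hP : IsBergePath_s14 H n v e) {a : ℕ} (ha : a ≤ n)
    {h : Finset V} (hh : h ∈ H) (hun : ∀ j < n, a ≤ j → h ≠ e j) (hva : v a ∈ h)
    (hvn : v n ∈ h) : HasBergeCycle H (n - a + 1) :=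
  (hP.drop ha).hasBergeCycle_of_closing_edge hh (fun j hj => hun _ (by omega) (by omega))
    (by simpa using hva) (by simpa [Nat.add_sub_cancel' ha] using hvn)

theorem rotate_s14 (hP : IsBergePath_s14 H n v e) {t : ℕ} (ht : t < n) {f : Finset V} (hf : f ∈ H)
    (hfun : ∀ j < n, f ≠ e j) (hvt : v t ∈ f) (hvn : v n ∈ f) :
    ∃ E : ℕ → Finset V,
      IsBergePath_s14 H n (fun i => v (if i ≤ t then i else n + t + 1 - i)) E ∧ ∀ j < n, E j ≠ e t := by
  have he : ∀ i < n, ∀ j < n, e i = e j → i = j := fun i hi j hj hij =>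
    hP.injOn_edge (Set.mem_Iio.2 hi) (Set.mem_Iio.2 hj) hij
  -- the path `v 0, e 0, …, v t, f, v n, e (n - 1), v (n - 1), …, e (t + 1), v (t + 1)`
  refine ⟨fun j => if j < t then e j else if j = t then f else e (n + t - j), ⟨?_, ?_, ?_, ?_⟩, ?_⟩
  · intro i hi j hj hij
    simp only [Set.mem_Iic] at hi hj
    have := hP.injOn_vertex (by simp; split_ifs <;> omega) (by simp; split_ifs <;> omega) hij
    split_ifs at this <;> omega
  · intro i hi j hj hij
    simp only [Set.mem_Iio] at hi hj
    dsimp only at hij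
    split_ifs at hij
    all_goals first
      | omega
      | exact absurd hij (hfun _ (by omega))
      | exact absurd hij.symm (hfun _ (by omega))
      | have := he _ (by omega) _ (by omega) hij; omega
  · intro i hi
    split_ifs
    exacts [hP.edge_mem _ (by omega), hf, hP.edge_mem _ (by omega)]
  · intro i hi
    rcases lt_trichotomy i t with hit | rfl | hit
    · simpa [hit, hit.le, Nat.succ_le_of_lt hit] using hP.mem_edge i (hit.trans ht)
    · simpa [show n + i + 1 - (i + 1) = n by omega] using ⟨hvt, hvn⟩
    · have := hP.mem_edge (n + t - i) (by omega)
      simp only [hit.ne', not_le.2 hit, not_lt.2 hit.le, if_false,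
        show ¬ i + 1 ≤ t by omega, show n + t + 1 - i = n + t - i + 1 by omega,
        show n + t + 1 - (i + 1) = n + t - i by omega]
      exact this.symm
  · intro j hj
    dsimp only
    split_ifs with h₁ h₂
    · exact fun h => by have := he _ hj _ ht h; omega
    · exact hfun t ht
    · exact fun h => by have := he _ (by omega) _ ht h; omega

end IsBergePath_s14

theorem exists_isBergePath_forall_le {V : Type*} [Nonempty V] (H : Finset (Finset V)) :
    ∃ N v e, IsBergePath_s14 H N v e ∧ ∀ n w E, IsBergePath_s14 H n w E → n ≤ N := by
  classical
  have h₀ : ∃ v e, IsBergePath_s14 H 0 v e :=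
    ⟨fun _ => Classical.arbitrary V, fun _ => ∅, by simp [Set.InjOn], by simp [Set.InjOn],
      by simp, by simp⟩
  obtain ⟨v, e, hP⟩ := Nat.findGreatest_spec (P := fun n => ∃ v e, IsBergePath_s14 H n v e)
    (Nat.zero_le H.card) h₀
  exact ⟨_, v, e, hP, fun n w E hQ => Nat.le_findGreatest hQ.length_le_card ⟨w, E, hQ⟩⟩

namespace IsBergePath_s14

open Finset

variable {V : Type*} [DecidableEq V] {H : Finset (Finset V)} {k N : ℕ} {v : ℕ → V}
  {e : ℕ → Finset V}

theorem subset_image_Icc_of_unused (hP : IsBergePath_s14 H N v e)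
    (hmax : ∀ n w E, IsBergePath_s14 H n w E → n ≤ N) (hcyc : ∀ ℓ, k ≤ ℓ → ¬HasBergeCycle H ℓ)
    {h : Finset V} (hh : h ∈ H) (hun : ∀ j < N, h ≠ e j) (hvN : v N ∈ h) :
    h ⊆ (Icc (N + 2 - k) N).image v := by
  intro x hx
  by_cases hxP : ∃ i ≤ N, v i = x
  · obtain ⟨i, hi, rfl⟩ := hxP
    refine mem_image_of_mem v (mem_Icc.2 ⟨?_, hi⟩)
    by_contra hik
    exact hcyc (N - i + 1) (by omega)
      (hP.hasBergeCycle_of_closing_edge_of_le hi hh (fun j hj _ => hun j hj) hx hvN)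
  · push Not at hxP
    have := hmax _ _ _ (hP.snoc_s14 hh hun hvN hx hxP)
    omega

theorem exists_eq_edge_or_unused_subset (hP : IsBergePath_s14 H N v e)
    (hmax : ∀ n w E, IsBergePath_s14 H n w E → n ≤ N) (hcyc : ∀ ℓ, k ≤ ℓ → ¬HasBergeCycle H ℓ)
    {h : Finset V} (hh : h ∈ H) (hvN : v N ∈ h) :
    (∃ t, N + 1 - k ≤ t ∧ t < N ∧ h = e t) ∨
      ((∀ j < N, h ≠ e j) ∧ h ⊆ (Icc (N + 2 - k) N).image v) := by
  by_cases hused : ∃ t < N, h = e t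
  · obtain ⟨t, ht, rfl⟩ := hused
    refine Or.inl ⟨t, ?_, ht, rfl⟩
    by_contra htk
    have hun : ∀ j < N, t + 1 ≤ j → e t ≠ e j := fun j hj htj heq => by
      have := hP.injOn_edge (Set.mem_Iio.2 ht) (Set.mem_Iio.2 hj) heq
      omega
    exact hcyc (N - (t + 1) + 1) (by omega)
      (hP.hasBergeCycle_of_closing_edge_of_le ht hh hun (hP.mem_edge t ht).2 hvN)
  · push Not at hused
    exact Or.inr ⟨hused, hP.subset_image_Icc_of_unused hmax hcyc hh hused hvN⟩

theorem edge_subset_image_Icc (hP : IsBergePath_s14 H N v e)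
    (hmax : ∀ n w E, IsBergePath_s14 H n w E → n ≤ N) (hcyc : ∀ ℓ, k ≤ ℓ → ¬HasBergeCycle H ℓ)
    {t : ℕ} (ht : t < N) (htk : N + 2 - k ≤ t) {f : Finset V} (hf : f ∈ H)
    (hfun : ∀ j < N, f ≠ e j) (hvt : v t ∈ f) (hvN : v N ∈ f) :
    e t ⊆ (Icc (N + 2 - k) N).image v := by
  obtain ⟨E, hQ, hEt⟩ := hP.rotate_s14 ht hf hfun hvt hvN
  have hend : v (if N ≤ t then N else N + t + 1 - N) ∈ e t := by
    simpa [not_le.2 ht, show N + t + 1 - N = t + 1 by omega] using (hP.mem_edge t ht).2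
  intro x hx
  obtain ⟨i, hi, rfl⟩ := mem_image.1 <|
    hQ.subset_image_Icc_of_unused hmax hcyc (hP.edge_mem t ht) (fun j hj => (hEt j hj).symm)
      hend hx
  rw [mem_Icc] at hi
  exact mem_image_of_mem v (mem_Icc.2 (by split_ifs <;> omega))

theorem hDegree_le_of_forall_not_mem (hP : IsBergePath_s14 H N v e)
    (hmax : ∀ n w E, IsBergePath_s14 H n w E → n ≤ N) (hcyc : ∀ ℓ, k ≤ ℓ → ¬HasBergeCycle H ℓ)
    {t : ℕ} (ht : t ≤ N) (htk : N + 2 - k ≤ t)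
    (hno : ∀ f ∈ H, (∀ j < N, f ≠ e j) → v N ∈ f → v t ∉ f) :
    hDegree H (v N) ≤ k - 1 + 2 ^ (k - 3) := by
  set L := (Icc (N + 2 - k) N).image v
  have hL : L.card ≤ k - 1 := card_image_le.trans (by simp; omega)
  have hvtL : v t ∈ L := mem_image_of_mem v (mem_Icc.2 ⟨htk, ht⟩)
  have hsub : H.filter (v N ∈ ·) ⊆
      (Ico (N + 1 - k) N).image e ∪ (L.erase (v t)).powerset.filter (v N ∈ ·) := by
    intro h hh
    rw [mem_filter] at hh
    rcases hP.exists_eq_edge_or_unused_subset hmax hcyc hh.1 hh.2 with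
      ⟨s, hs, hsN, rfl⟩ | ⟨hun, hhL⟩
    · exact mem_union_left _ (mem_image_of_mem e (mem_Ico.2 ⟨hs, hsN⟩))
    · refine mem_union_right _ (mem_filter.2 ⟨mem_powerset.2 fun x hx => ?_, hh.2⟩)
      exact mem_erase.2 ⟨by rintro rfl; exact hno h hh.1 hun hh.2 hx, hhL hx⟩
  calc hDegree H (v N) ≤ _ := card_le_card hsub
    _ ≤ _ := card_union_le _ _
    _ ≤ (Ico (N + 1 - k) N).card + 2 ^ ((L.erase (v t)).card - 1) :=
      add_le_add card_image_le (card_filter_mem_powerset_le _ _)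
    _ ≤ k - 1 + 2 ^ (k - 3) := by
      rw [Nat.card_Ico, card_erase_of_mem hvtL]
      exact add_le_add (by omega) (Nat.pow_le_pow_right two_pos (by omega))

theorem hDegree_le_of_forall_edge_subset (hP : IsBergePath_s14 H N v e)
    (hmax : ∀ n w E, IsBergePath_s14 H n w E → n ≤ N) (hcyc : ∀ ℓ, k ≤ ℓ → ¬HasBergeCycle H ℓ)
    (hsub : ∀ t < N, N + 2 - k ≤ t → e t ⊆ (Icc (N + 2 - k) N).image v) :
    hDegree H (v N) ≤ 2 ^ (k - 2) + 1 := by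
  set L := (Icc (N + 2 - k) N).image v
  have hL : L.card ≤ k - 1 := card_image_le.trans (by simp; omega)
  have hA : H.filter (v N ∈ ·) ⊆ insert (e (N + 1 - k)) (L.powerset.filter (v N ∈ ·)) := by
    intro h hh
    rw [mem_filter] at hh
    rcases hP.exists_eq_edge_or_unused_subset hmax hcyc hh.1 hh.2 with
      ⟨t, ht, htN, rfl⟩ | ⟨-, hhL⟩
    · rcases (show t = N + 1 - k ∨ N + 2 - k ≤ t by omega) with rfl | htk
      · exact mem_insert_self _ _
      · exact mem_insert_of_mem (mem_filter.2 ⟨mem_powerset.2 (hsub t htN htk), hh.2⟩)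
    · exact mem_insert_of_mem (mem_filter.2 ⟨mem_powerset.2 hhL, hh.2⟩)
  calc hDegree H (v N) ≤ _ := card_le_card hA
    _ ≤ _ := card_insert_le _ _
    _ ≤ 2 ^ (L.card - 1) + 1 := add_le_add_left (card_filter_mem_powerset_le _ _) 1
    _ ≤ 2 ^ (k - 2) + 1 := add_le_add_left (Nat.pow_le_pow_right two_pos (by omega)) 1

end IsBergePath_s14

theorem stmt_14_general {V : Type*} [DecidableEq V] [Nonempty V] (k : ℕ)
    (H : Finset (Finset V))
    (hδ : ∀ v : V, 2 ^ (k - 2) + 2 ≤ hDegree H v) :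
    ∃ ℓ : ℕ, k ≤ ℓ ∧ HasBergeCycle H ℓ := by
  by_contra! hcyc
  obtain ⟨N, v, e, hP, hmax⟩ := exists_isBergePath_forall_le H
  have hsub : ∀ t < N, N + 2 - k ≤ t → e t ⊆ (Finset.Icc (N + 2 - k) N).image v := by
    intro t ht htk
    obtain ⟨f, hf, hfun, hvN, hvt⟩ : ∃ f ∈ H, (∀ j < N, f ≠ e j) ∧ v N ∈ f ∧ v t ∈ f := by
      by_contra! hno
      have := hP.hDegree_le_of_forall_not_mem hmax hcyc ht.le htk hno
      have := sub_one_add_two_pow_sub_three_lt k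
      have := hδ (v N)
      omega
    exact hP.edge_subset_image_Icc hmax hcyc ht htk hf hfun hvt hvN
  have := hP.hDegree_le_of_forall_edge_subset hmax hcyc hsub
  have := hδ (v N)
  omega

/-- Dirac-type condition for long Berge cycles: if `k ≥ 3` and `H` is a simple hypergraph
with minimum degree at least `2^(k-2) + 2`, then `H` contains a Berge cycle of length at
least `k`. -/
theorem stmt_14 {V : Type*} [DecidableEq V] [Nonempty V] (k : ℕ) (hk : 3 ≤ k)
    (H : Finset (Finset V))
    (hδ : ∀ v : V, 2 ^ (k - 2) + 2 ≤ hDegree H v) :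
    ∃ ℓ : ℕ, k ≤ ℓ ∧ HasBergeCycle H ℓ :=
  stmt_14_general k H hδ
end

section
/- For k ≥ 3 and n divisible by k−1, the n-vertex hypergraph consisting of all subsets of the parts of a partition of [n] into (k−1)-sets, together with the single extra hyperedge [n], has minimum degree 2^(k−2) + 1 and contains no Berge cycle of length k or longer. -/
open Finset

lemma card_powerset_mem {V : Type*} [DecidableEq V] (A : Finset V) (v : V) (hv : v ∈ A) :
    (A.powerset.filter (fun S => v ∈ S)).card = 2 ^ (A.card - 1) := by
  rw [show A.card - 1 = (A.erase v).card from (Finset.card_erase_of_mem hv).symm,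
    ← Finset.card_powerset]
  refine Finset.card_bij' (fun S _ => S.erase v) (fun S _ => insert v S) ?hi ?hj ?li ?ri
  case hi =>
    intro S hS
    simp only [mem_filter, mem_powerset] at hS
    rw [mem_powerset]
    exact Finset.erase_subset_erase v hS.1
  case hj =>
    intro S hS
    rw [mem_powerset] at hS
    simp only [mem_filter, mem_powerset]
    exact ⟨Finset.insert_subset hv (hS.trans (Finset.erase_subset _ _)), Finset.mem_insert_self _ _⟩
  case li =>
    intro S hS
    simp only [mem_filter] at hS
    exact Finset.insert_erase hS.2
  case ri =>
    intro S hS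
    rw [mem_powerset] at hS
    exact Finset.erase_insert (fun h => (Finset.mem_erase.1 (hS h)).1 rfl)


/-- Sharpness example for long Berge cycles: for `k ≥ 3` and `n` divisible by `k-1`
(with more than one block, i.e. `k - 1 < n`), the hypergraph consisting of all subsets
of the blocks of a partition of the `n` vertices into `(k-1)`-sets, together with the
single extra hyperedge consisting of all vertices, has minimum degree `2^(k-2) + 1` and
no Berge cycle of length `k` or longer. -/
theorem stmt_15 {V : Type*} [Fintype V] [DecidableEq V] (k n : ℕ) (hk : 3 ≤ k)
    (hn : Fintype.card V = n) (hdvd : (k - 1) ∣ n) (hkn : k - 1 < n)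
    (B : Finset (Finset V))
    (hcard : ∀ A ∈ B, A.card = k - 1)
    (hdisj : ∀ A ∈ B, ∀ A' ∈ B, A ≠ A' → Disjoint A A')
    (hcover : ∀ v : V, ∃ A ∈ B, v ∈ A)
    (H : Finset (Finset V))
    (hH : H = (Finset.univ : Finset (Finset V)).filter
      (fun S => S = Finset.univ ∨ ∃ A ∈ B, S ⊆ A)) :
    (∀ v : V, hDegree H v = 2 ^ (k - 2) + 1) ∧
    ¬ ∃ ℓ : ℕ, k ≤ ℓ ∧ HasBergeCycle H ℓ := by
  subst hH
  -- uniqueness of blocks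
  have uniq : ∀ {A A' : Finset V}, A ∈ B → A' ∈ B → ∀ {w : V}, w ∈ A → w ∈ A' → A = A' := by
    intro A A' hA hA' w hw hw'
    by_contra hne
    exact (hdisj A hA A' hA' hne).forall_ne_finset hw hw' rfl
  have hnotuniv : ∀ A ∈ B, ¬ ((Finset.univ : Finset V) ⊆ A) := by
    intro A hA hsub
    have := Finset.card_le_card hsub
    rw [Finset.card_univ, hn, hcard A hA] at this
    omega
  constructor
  · intro v
    obtain ⟨A, hA, hvA⟩ := hcover v
    have hset : ((Finset.univ : Finset (Finset V)).filter
        (fun S => S = Finset.univ ∨ ∃ A' ∈ B, S ⊆ A')).filter (fun e => v ∈ e)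
        = insert Finset.univ (A.powerset.filter (fun S => v ∈ S)) := by
      ext S
      simp only [mem_filter, mem_insert, mem_powerset, Finset.mem_univ, true_and]
      constructor
      · rintro ⟨hS | ⟨A', hA', hSA'⟩, hvS⟩
        · exact Or.inl hS
        · refine Or.inr ⟨?_, hvS⟩
          have : A' = A := uniq hA' hA (hSA' hvS) hvA
          rwa [← this]
      · rintro (rfl | ⟨hSA, hvS⟩)
        · exact ⟨Or.inl rfl, Finset.mem_univ v⟩
        · exact ⟨Or.inr ⟨A, hA, hSA⟩, hvS⟩
    rw [hDegree, hset, Finset.card_insert_of_notMem, card_powerset_mem A v hvA, hcard A hA]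
    · rw [show k - 1 - 1 = k - 2 from by omega]
    · intro hmem
      simp only [mem_filter, mem_powerset] at hmem
      exact hnotuniv A hA hmem.1
  · rintro ⟨ℓ, hkℓ, v, e, hvinj, heinj, heH, hcyc⟩
    have hℓpos : 0 < ℓ := by omega
    -- edges description
    have hedge : ∀ i, e i = Finset.univ ∨ ∃ A ∈ B, e i ⊆ A := by
      intro i
      have := heH i
      simp only [mem_filter, Finset.mem_univ, true_and] at this
      exact this
    -- pick the (at most one) universal edge index
    obtain ⟨i₀, hskip⟩ : ∃ i₀ : Fin ℓ, ∀ i, i ≠ i₀ → ∃ A ∈ B, e i ⊆ A := by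
      by_cases hu : ∃ i, e i = Finset.univ
      · obtain ⟨i₀, hi₀⟩ := hu
        refine ⟨i₀, fun i hi => ?_⟩
        rcases hedge i with h | h
        · exact absurd (heinj (h.trans hi₀.symm)) hi
        · exact h
      · refine ⟨⟨0, hℓpos⟩, fun i _ => ?_⟩
        rcases hedge i with h | h
        · exact absurd ⟨i, h⟩ hu
        · exact h
    -- choose a block for each vertex
    choose blk hblkB hblkmem using hcover
    set idx : ℕ → Fin ℓ := fun j => ⟨(i₀.1 + 1 + j) % ℓ, Nat.mod_lt _ hℓpos⟩ with hidx
    set A₀ : Finset V := blk (v (idx 0)) with hA₀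
    have key : ∀ j, j < ℓ → v (idx j) ∈ A₀ := by
      intro j
      induction j with
      | zero => intro _; exact hblkmem _
      | succ j ih =>
        intro hj
        have hjℓ : j < ℓ := by omega
        have ihj := ih hjℓ
        have hne : idx j ≠ i₀ := by
          intro hcon
          have hval : (i₀.1 + (1 + j)) % ℓ = i₀.1 % ℓ := by
            rw [Nat.mod_eq_of_lt i₀.2, ← Nat.add_assoc]
            exact congrArg Fin.val hcon
          have : (1 + j) % ℓ = 0 % ℓ := Nat.ModEq.add_left_cancel' i₀.1 hval
          rw [Nat.zero_mod, Nat.mod_eq_of_lt (by omega : 1 + j < ℓ)] at this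
          omega
        obtain ⟨A', hA'B, hsub⟩ := hskip (idx j) hne
        obtain ⟨h1, h2⟩ := hcyc (idx j)
        have hAA : A' = A₀ := uniq hA'B (hblkB _) (hsub h1) ihj
        have hstep : (⟨((idx j).1 + 1) % ℓ, Nat.mod_lt _ (idx j).pos⟩ : Fin ℓ) = idx (j + 1) := by
          apply Fin.ext
          simp only [hidx]
          rw [Nat.mod_add_mod, Nat.add_assoc]
        rw [hstep] at h2
        rw [← hAA]
        exact hsub h2
    -- the ℓ vertices v (idx j), j < ℓ, are distinct and all in A₀
    have hinjOn : Set.InjOn (fun j => v (idx j)) (Finset.range ℓ) := by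
      intro a ha b hb hab
      simp only [Finset.coe_range, Set.mem_Iio] at ha hb
      have : idx a = idx b := hvinj hab
      have hval : (i₀.1 + 1 + a) % ℓ = (i₀.1 + 1 + b) % ℓ := congrArg Fin.val this
      have := Nat.ModEq.add_left_cancel' (i₀.1 + 1) hval
      rwa [Nat.ModEq, Nat.mod_eq_of_lt ha, Nat.mod_eq_of_lt hb] at this
    have hsubA : (Finset.range ℓ).image (fun j => v (idx j)) ⊆ A₀ := by
      intro x hx
      simp only [Finset.mem_image, Finset.mem_range] at hx
      obtain ⟨j, hj, rfl⟩ := hx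
      exact key j hj
    have hcardA : ℓ ≤ A₀.card := by
      calc ℓ = ((Finset.range ℓ).image (fun j => v (idx j))).card := by
              rw [Finset.card_image_of_injOn hinjOn, Finset.card_range]
        _ ≤ A₀.card := Finset.card_le_card hsubA
    rw [hcard A₀ (hblkB _)] at hcardA
    omega
end

section
/- Let H be a simple hypergraph that is a downset (closed under taking subsets) and let G be its 2-shadow. If G contains a cycle of length ℓ, then H contains a Berge cycle of length ℓ. -/
lemma getVert_eq_support_getElem {V : Type*} {G : SimpleGraph V} {u v : V}
    (p : G.Walk u v) (i : ℕ) (h : i ≤ p.length) :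
    p.getVert i = p.support[i]'(by rw [SimpleGraph.Walk.length_support]; omega) := by
  induction p generalizing i with
  | nil =>
    have : i = 0 := by simpa using h
    subst this; rfl
  | cons hadj q ih =>
    cases i with
    | zero => simp [SimpleGraph.Walk.getVert]
    | succ n =>
      simp only [SimpleGraph.Walk.getVert_cons_succ, SimpleGraph.Walk.support_cons]
      rw [ih n (by simpa using h)]
      simp

lemma cycle_getVert_inj {V : Type*} {G : SimpleGraph V} {u : V}
    {c : G.Walk u u} (hc : c.IsCycle) {i j : ℕ} (hi : i < c.length) (hj : j < c.length)
    (h : c.getVert i = c.getVert j) : i = j := by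
  have hnd := hc.support_nodup
  have htl : c.support.tail.length = c.length := by
    have := c.length_support; cases hs : c.support with
    | nil => simp [hs] at this
    | cons a l => simp [hs] at this ⊢; omega
  have key : ∀ k, 1 ≤ k → (hk : k ≤ c.length) →
      c.getVert k = c.support.tail[k-1]'(by omega) := by
    intro k hk1 hk
    rw [getVert_eq_support_getElem c k hk, List.getElem_tail]
    congr 1
    omega
  set i' := if i = 0 then c.length else i with hi'
  set j' := if j = 0 then c.length else j with hj'
  have hgi : c.getVert i' = c.getVert i := by
    by_cases h0 : i = 0 <;> simp [hi', h0, SimpleGraph.Walk.getVert_length,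
      SimpleGraph.Walk.getVert_zero]
  have hgj : c.getVert j' = c.getVert j := by
    by_cases h0 : j = 0 <;> simp [hj', h0, SimpleGraph.Walk.getVert_length,
      SimpleGraph.Walk.getVert_zero]
  have hl3 := hc.three_le_length
  have hi'1 : 1 ≤ i' ∧ i' ≤ c.length := by
    by_cases h0 : i = 0 <;> simp [hi', h0] <;> omega
  have hj'1 : 1 ≤ j' ∧ j' ≤ c.length := by
    by_cases h0 : j = 0 <;> simp [hj', h0] <;> omega
  have heq : c.support.tail[i'-1]'(by omega) = c.support.tail[j'-1]'(by omega) := by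
    rw [← key i' hi'1.1 hi'1.2, ← key j' hj'1.1 hj'1.2, hgi, hgj, h]
  have := hnd.getElem_inj_iff.mp heq
  by_cases h0i : i = 0 <;> by_cases h0j : j = 0 <;> simp [hi', hj', h0i, h0j] at this <;> omega

/-- If a simple hypergraph `H` is a downset and its 2-shadow `G` contains a cycle of
length `ℓ`, then `H` contains a Berge cycle of length `ℓ`. -/
theorem stmt_17 {V : Type*} [DecidableEq V] (H : Finset (Finset V))
    (hdown : ∀ e ∈ H, ∀ e' ⊆ e, e' ∈ H)
    (G : SimpleGraph V)
    (hG : ∀ x y : V, G.Adj x y ↔ x ≠ y ∧ ∃ e ∈ H, x ∈ e ∧ y ∈ e)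
    (ℓ : ℕ) (u : V) (c : G.Walk u u) (hc : c.IsCycle) (hlen : c.length = ℓ) :
    HasBergeCycle H ℓ := by
  have hl3 : 3 ≤ ℓ := hlen ▸ hc.three_le_length
  have hmod : ∀ i : ℕ, i < ℓ → c.getVert ((i + 1) % ℓ) = c.getVert (i + 1) := by
    intro i hi
    rcases Nat.lt_or_ge (i + 1) ℓ with h | h
    · rw [Nat.mod_eq_of_lt h]
    · have h' : i + 1 = ℓ := by omega
      rw [h', Nat.mod_self, SimpleGraph.Walk.getVert_zero, ← hlen,
        SimpleGraph.Walk.getVert_length]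
  have vinj : ∀ (i j : Fin ℓ), c.getVert i.1 = c.getVert j.1 → i = j := by
    intro i j h
    exact Fin.ext (cycle_getVert_inj hc (hlen ▸ i.2) (hlen ▸ j.2) h)
  have msucc : ∀ i : Fin ℓ, (i.1 + 1) % ℓ = i.1 + 1 ∨ ((i.1 + 1) % ℓ = 0 ∧ i.1 + 1 = ℓ) := by
    intro i
    rcases Nat.lt_or_ge (i.1 + 1) ℓ with h | h
    · exact Or.inl (Nat.mod_eq_of_lt h)
    · have h' : i.1 + 1 = ℓ := by omega
      exact Or.inr ⟨by rw [h', Nat.mod_self], h'⟩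
  refine ⟨fun i => c.getVert i.1,
    fun i => {c.getVert i.1, c.getVert (i.1 + 1)}, ?_, ?_, ?_, ?_⟩
  · intro i j h; exact vinj i j h
  · -- injectivity of edges
    intro i j h
    dsimp only at h
    have succ_lt : ∀ i : Fin ℓ, (i.1 + 1) % ℓ < ℓ := fun i => Nat.mod_lt _ i.pos
    have h1 : c.getVert i.1 ∈ ({c.getVert j.1, c.getVert (j.1 + 1)} : Finset V) := by
      rw [← h]; simp
    have h2 : c.getVert (i.1 + 1) ∈ ({c.getVert j.1, c.getVert (j.1 + 1)} : Finset V) := by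
      rw [← h]; simp
    simp only [Finset.mem_insert, Finset.mem_singleton] at h1 h2
    rw [← hmod i.1 i.2] at h2
    rw [← hmod j.1 j.2] at h1 h2
    rcases h1 with h1 | h1
    · exact vinj i j h1
    · have e1 : i.1 = (j.1 + 1) % ℓ := congrArg Fin.val
        (vinj i ⟨(j.1+1) % ℓ, succ_lt j⟩ h1)
      rcases h2 with h2 | h2
      · have e2 : (i.1 + 1) % ℓ = j.1 := congrArg Fin.val
          (vinj ⟨(i.1+1) % ℓ, succ_lt i⟩ j h2)
        exfalso
        rcases msucc i with mi | ⟨mi, mi'⟩ <;> rcases msucc j with mj | ⟨mj, mj'⟩ <;> omega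
      · have e0 : ((i.1+1) % ℓ : ℕ) = (j.1+1) % ℓ := congrArg Fin.val
          (vinj ⟨(i.1+1) % ℓ, succ_lt i⟩ ⟨(j.1+1) % ℓ, succ_lt j⟩ h2)
        exfalso
        rcases msucc i with mi | ⟨mi, mi'⟩ <;> rcases msucc j with mj | ⟨mj, mj'⟩ <;> omega
  · -- membership in H
    intro i
    have hilt : (i.1 : ℕ) < c.length := by omega
    have hadj := c.adj_getVert_succ hilt
    rw [hG] at hadj
    obtain ⟨hne, e, heH, hx, hy⟩ := hadj
    refine hdown e heH _ ?_
    intro z hz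
    simp only [Finset.mem_insert, Finset.mem_singleton] at hz
    rcases hz with rfl | rfl <;> assumption
  · intro i
    constructor
    · simp
    · show c.getVert ((i.1 + 1) % ℓ) ∈ _
      rw [hmod i.1 i.2]
      simp
end

section
/- Let k ≥ 6 and let G be the union of two vertex-disjoint complete graphs K_{k+1} on vertex sets V₁ and V₂ with at most one additional edge between them (so G ∈ G₁ on n = 2k+2 vertices). If A is any set of at most 2 edges of G and B consists of two vertex-disjoint pairs x₁x₂ and y₁y₂ joining V₁ and V₂, then the graph (E(G) \ A) ∪ B is Hamiltonian. -/
/-!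
A clique on `m` vertices from which `f` edges are removed, `2 f + 3 ≤ m`, still has a
Hamiltonian path between any two given vertices. Build it greedily from the start `a`: if a
removed edge meets `a`, step to any admissible neighbour, which discards at least one removed
edge at the cost of one vertex; otherwise step to an endpoint of a removed edge, so that the
next vertex meets one. For `k ≥ 6` each `V_i` is a clique on at least `7` vertices losing at
most two edges, so there are Hamiltonian paths `x₁ ⋯ y₁` in `V₁` and `y₂ ⋯ x₂` in `V₂`, and the
new edges `y₁y₂` and `x₂x₁` close them into a Hamiltonian cycle.
-/

open Finset

namespace SimpleGraph

variable {V : Type*} [DecidableEq V] {H H' : SimpleGraph V} {S T : Finset V} {a b c d : V}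

def HasHamiltonianPathOn (H : SimpleGraph V) (S : Finset V) (a b : V) : Prop :=
  ∃ p : H.Walk a b, p.IsPath ∧ p.support.toFinset = S

namespace HasHamiltonianPathOn

lemma mono (h : H.HasHamiltonianPathOn S a b) (hle : H ≤ H') : H'.HasHamiltonianPathOn S a b := by
  obtain ⟨p, hp, hS⟩ := h
  exact ⟨p.mapLe hle, hp.mapLe hle, by rwa [Walk.support_mapLe_eq_support]⟩

lemma cons (hac : H.Adj a c) (ha : a ∉ S) (h : H.HasHamiltonianPathOn S c b) :
    H.HasHamiltonianPathOn (insert a S) a b := by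
  obtain ⟨p, hp, rfl⟩ := h
  exact ⟨.cons hac p, hp.cons (by simpa using ha), by simp⟩

lemma append (h₁ : H.HasHamiltonianPathOn S a b) (hbc : H.Adj b c)
    (h₂ : H.HasHamiltonianPathOn T c d) (hST : Disjoint S T) :
    H.HasHamiltonianPathOn (S ∪ T) a d := by
  obtain ⟨p, hp, rfl⟩ := h₁
  obtain ⟨q, hq, rfl⟩ := h₂
  refine ⟨p.append (.cons hbc q), ?_, by simp [Walk.support_append, List.toFinset_append]⟩
  rw [Walk.isPath_def, Walk.support_append, Walk.support_cons, List.tail_cons,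
    List.nodup_append]
  refine ⟨hp.support_nodup, hq.support_nodup, fun x hxp y hyq hxy => ?_⟩
  subst hxy
  exact Finset.disjoint_left.mp hST (List.mem_toFinset.mpr hxp) (List.mem_toFinset.mpr hyq)

lemma isHamiltonian [Fintype V] (h : H.HasHamiltonianPathOn univ a b) (hba : H.Adj b a)
    (hcard : 3 ≤ Fintype.card V) : H.IsHamiltonian := by
  obtain ⟨p, hp, hS⟩ := h
  have hham : p.IsHamiltonian :=
    hp.isHamiltonian_of_mem fun w => List.mem_toFinset.mp (hS ▸ mem_univ w)
  have hba_edge : s(b, a) ∉ p.edges := fun he => by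
    have := hp.length_eq_one_of_mem_edges (Sym2.eq_swap ▸ he)
    have := hham.length_eq
    omega
  exact fun _ => ⟨b, .cons hba p, (Walk.cons_isCycle_iff p hba).mpr ⟨hp, hba_edge⟩,
    by simpa [Walk.IsHamiltonian] using hham⟩

end HasHamiltonianPathOn

lemma IsClique.hasHamiltonianPathOn (hS : H.IsClique (S : Set V)) (ha : a ∈ S) (hb : b ∈ S)
    (hab : a ≠ b) : H.HasHamiltonianPathOn S a b := by
  induction S using Finset.strongInduction generalizing a with
  | H S ih =>
  by_cases hSab : S ⊆ {a, b}
  · obtain rfl : S = {a, b} := hSab.antisymm (by simp [insert_subset_iff, ha, hb])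
    exact .cons (hS ha hb hab) (by simpa using hab) ⟨.nil, .nil, by simp⟩
  obtain ⟨c, hcS, hc⟩ := not_subset.mp hSab
  simp only [mem_insert, mem_singleton, not_or] at hc
  have hpath := ih (S.erase a) (erase_ssubset ha) (hS.subset (by simp)) (mem_erase.mpr ⟨hc.1, hcS⟩)
    (mem_erase.mpr ⟨hab.symm, hb⟩) hc.2
  simpa [insert_erase ha] using hpath.cons (hS ha hcS (Ne.symm hc.1)) (notMem_erase a S)

lemma exists_mem_ne_ne_sym2_notMem {F : Finset (Sym2 V)} (hcard : #F + 2 < #S) (a b : V) :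
    ∃ c ∈ S, c ≠ a ∧ c ≠ b ∧ s(a, c) ∉ F := by
  by_contra! h
  have hle : #(S \ {a, b}) ≤ #F :=
    card_le_card_of_injOn (fun c => s(a, c)) (fun c hc => by grind)
      (fun u _ v _ huv => Sym2.congr_right.mp huv)
  have := le_card_sdiff {a, b} S
  have := card_le_two (a := a) (b := b)
  omega

theorem hasHamiltonianPathOn_of_adj_of_notMem {F : Finset (Sym2 V)}
    (ha : a ∈ S) (hb : b ∈ S) (hab : a ≠ b) (hFdiag : ∀ e ∈ F, ¬e.IsDiag)
    (hFS : F ⊆ S.sym2)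
    (hadj : ∀ u v, u ≠ v → u ∈ S → v ∈ S → s(u, v) ∉ F → H.Adj u v)
    (hcard : 2 * #F + 3 ≤ #S ∨ 2 * #F + 2 ≤ #S ∧ ∃ e ∈ F, a ∈ e) :
    H.HasHamiltonianPathOn S a b := by
  induction S using Finset.strongInduction generalizing F a with
  | H S ih =>
  obtain rfl | ⟨e₀, he₀⟩ := F.eq_empty_or_nonempty
  · exact IsClique.hasHamiltonianPathOn (fun u hu v hv huv => hadj u v huv hu hv (notMem_empty _))
      ha hb hab
  have step : ∀ c ∈ S, c ≠ a → c ≠ b → s(a, c) ∉ F →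
      (2 * #(F.filter (a ∉ ·)) + 3 ≤ #S - 1 ∨
        2 * #(F.filter (a ∉ ·)) + 2 ≤ #S - 1 ∧ ∃ e ∈ F.filter (a ∉ ·), c ∈ e) →
      H.HasHamiltonianPathOn S a b := by
    intro c hcS hca hcb hacF hcard'
    have hpath := ih (S.erase a) (erase_ssubset ha) (F := F.filter (a ∉ ·))
      (mem_erase.mpr ⟨hca, hcS⟩) (mem_erase.mpr ⟨hab.symm, hb⟩) hcb
      (fun e he => hFdiag e (mem_filter.mp he).1)
      (fun e he => mem_sym2_iff.mpr fun x hx => mem_erase.mpr ⟨fun hxa => (mem_filter.mp he).2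
        (hxa ▸ hx), mem_sym2_iff.mp (hFS (mem_filter.mp he).1) x hx⟩)
      (fun u v huv hu hv huvF => hadj u v huv (mem_of_mem_erase hu) (mem_of_mem_erase hv)
        fun h => huvF (mem_filter.mpr ⟨h, by
          simp [Sym2.mem_iff, (ne_of_mem_erase hu).symm, (ne_of_mem_erase hv).symm]⟩))
      (by rwa [card_erase_of_mem ha])
    simpa [insert_erase ha] using hpath.cons (hadj a c hca.symm ha hcS hacF) (notMem_erase a S)
  by_cases haF : ∃ e ∈ F, a ∈ e
  · obtain ⟨e, heF, hae⟩ := haF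
    have hlt : #(F.filter (a ∉ ·)) < #F :=
      card_lt_card (filter_ssubset.mpr ⟨e, heF, not_not.mpr hae⟩)
    have hSF : #F + 2 < #S := by
      have := card_pos.mpr ⟨e, heF⟩
      omega
    obtain ⟨c, hcS, hca, hcb, hacF⟩ := exists_mem_ne_ne_sym2_notMem hSF a b
    exact step c hcS hca hcb hacF (Or.inl (by omega))
  · push Not at haF
    have hF : F.filter (a ∉ ·) = F := filter_true_of_mem haF
    obtain ⟨c, hce, hcb⟩ : ∃ c ∈ e₀, c ≠ b := by
      induction e₀ using Sym2.ind with
      | h u v =>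
        have huv : u ≠ v := by simpa using hFdiag _ he₀
        by_cases hub : u = b
        · exact ⟨v, Sym2.mem_mk_right u v, hub ▸ huv.symm⟩
        · exact ⟨u, Sym2.mem_mk_left u v, hub⟩
    have hca : c ≠ a := fun h => haF e₀ he₀ (h ▸ hce)
    have hS : 2 * #F + 3 ≤ #S :=
      hcard.resolve_right fun ⟨_, e, heF, hae⟩ => haF e heF hae
    exact step c (mem_sym2_iff.mp (hFS he₀) c hce) hca hcb
      (fun h => haF _ h (Sym2.mem_mk_left a c))
      (Or.inr (by rw [hF]; exact ⟨by omega, e₀, he₀, hce⟩))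

lemma IsClique.hasHamiltonianPathOn_deleteEdges {G : SimpleGraph V} (hS : G.IsClique (S : Set V))
    {A : Finset (Sym2 V)} (hA : ↑A ⊆ G.edgeSet) (hcard : 2 * #A + 3 ≤ #S) (ha : a ∈ S)
    (hb : b ∈ S) (hab : a ≠ b) : (G.deleteEdges ↑A).HasHamiltonianPathOn S a b := by
  have hAS := card_le_card (inter_subset_left (s₁ := A) (s₂ := S.sym2))
  refine hasHamiltonianPathOn_of_adj_of_notMem (F := A ∩ S.sym2) ha hb hab
    (fun e he => G.not_isDiag_of_mem_edgeSet (hA (mem_inter.mp he).1)) inter_subset_right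
    (fun u v huv hu hv huvF => ?_) (Or.inl (by omega))
  exact deleteEdges_adj.mpr ⟨hS hu hv huv, fun h => huvF (mem_inter.mpr ⟨h, by simp [hu, hv]⟩)⟩

end SimpleGraph

theorem stmt_19_general {V : Type*} [Fintype V] [DecidableEq V] (G : SimpleGraph V)
    (k : ℕ) (hk : 6 ≤ k) (V₁ V₂ : Finset V)
    (hunion : V₁ ∪ V₂ = Finset.univ) (hdisj : Disjoint V₁ V₂)
    (hcard₁ : V₁.card = k + 1) (hcard₂ : V₂.card = k + 1)
    (hclique₁ : ∀ a b : V, a ≠ b → a ∈ V₁ → b ∈ V₁ → G.Adj a b)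
    (hclique₂ : ∀ a b : V, a ≠ b → a ∈ V₂ → b ∈ V₂ → G.Adj a b)
    (A : Finset (Sym2 V)) (hA : ↑A ⊆ G.edgeSet) (hAcard : A.card ≤ 2)
    (x₁ y₁ x₂ y₂ : V) (hx₁ : x₁ ∈ V₁) (hy₁ : y₁ ∈ V₁) (hx₂ : x₂ ∈ V₂) (hy₂ : y₂ ∈ V₂)
    (hxy₁ : x₁ ≠ y₁) (hxy₂ : x₂ ≠ y₂) :
    (SimpleGraph.fromEdgeSet ((G.edgeSet \ ↑A) ∪ {s(x₁, x₂), s(y₁, y₂)})).IsHamiltonian := by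
  set H := SimpleGraph.fromEdgeSet ((G.edgeSet \ ↑A) ∪ {s(x₁, x₂), s(y₁, y₂)})
  have hle : G.deleteEdges ↑A ≤ H := fun u v h => by
    simp_all [H, SimpleGraph.fromEdgeSet_adj, h.1.ne]
  have hx₁₂ : x₁ ≠ x₂ := fun h => disjoint_left.mp hdisj hx₁ (h ▸ hx₂)
  have hy₁₂ : y₁ ≠ y₂ := fun h => disjoint_left.mp hdisj hy₁ (h ▸ hy₂)
  have hpath₁ := SimpleGraph.IsClique.hasHamiltonianPathOn_deleteEdges
    (fun u hu v hv huv => hclique₁ u v huv hu hv) hA (by omega) hx₁ hy₁ hxy₁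
  have hpath₂ := SimpleGraph.IsClique.hasHamiltonianPathOn_deleteEdges
    (fun u hu v hv huv => hclique₂ u v huv hu hv) hA (by omega) hy₂ hx₂ hxy₂.symm
  have hpath : H.HasHamiltonianPathOn univ x₁ x₂ := hunion ▸
    (hpath₁.mono hle).append (by simp [H, hy₁₂]) (hpath₂.mono hle) hdisj
  have hcard : Fintype.card V = 2 * k + 2 := by
    rw [← card_univ, ← hunion, card_union_of_disjoint hdisj]
    omega
  exact hpath.isHamiltonian (by simp [H, Sym2.eq_swap, hx₁₂.symm]) (by omega)

/-- Lemma on modified graphs in class `𝒢₁`: let `k ≥ 6` and let `G` consist of two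
disjoint `(k+1)`-cliques on `V₁` and `V₂` covering all `n = 2k+2` vertices, plus at most
one crossing edge. If `A` is any set of at most two edges of `G`, and `B` consists of two
vertex-disjoint crossing pairs `x₁x₂` and `y₁y₂` (`x₁, y₁ ∈ V₁`, `x₂, y₂ ∈ V₂`), then
the graph with edge set `(E(G) \ A) ∪ B` is Hamiltonian. -/
theorem stmt_19 {V : Type*} [Fintype V] [DecidableEq V] (G : SimpleGraph V)
    (k : ℕ) (hk : 6 ≤ k) (V₁ V₂ : Finset V)
    (hunion : V₁ ∪ V₂ = Finset.univ) (hdisj : Disjoint V₁ V₂)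
    (hcard₁ : V₁.card = k + 1) (hcard₂ : V₂.card = k + 1)
    (hclique₁ : ∀ a b : V, a ≠ b → a ∈ V₁ → b ∈ V₁ → G.Adj a b)
    (hclique₂ : ∀ a b : V, a ≠ b → a ∈ V₂ → b ∈ V₂ → G.Adj a b)
    (hcross : {e : Sym2 V | e ∈ G.edgeSet ∧ ¬ (∀ x ∈ e, x ∈ V₁) ∧
      ¬ (∀ x ∈ e, x ∈ V₂)}.Subsingleton)
    (A : Finset (Sym2 V)) (hA : ↑A ⊆ G.edgeSet) (hAcard : A.card ≤ 2)
    (x₁ y₁ x₂ y₂ : V) (hx₁ : x₁ ∈ V₁) (hy₁ : y₁ ∈ V₁) (hx₂ : x₂ ∈ V₂) (hy₂ : y₂ ∈ V₂)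
    (hxy₁ : x₁ ≠ y₁) (hxy₂ : x₂ ≠ y₂) :
    (SimpleGraph.fromEdgeSet ((G.edgeSet \ ↑A) ∪ {s(x₁, x₂), s(y₁, y₂)})).IsHamiltonian :=
  stmt_19_general G k hk V₁ V₂ hunion hdisj hcard₁ hcard₂ hclique₁ hclique₂ A hA hAcard x₁ y₁ x₂ y₂
    hx₁ hy₁ hx₂ hy₂ hxy₁ hxy₂
end
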